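/- arXiv:1612.05104 — 7 statements merged into one kernel-verified Lean document; each statement's English description precedes it below -/
import Mathlib

section
/- Let X be a separable metric space, ξ and (ξ_n) X-valued random variables, and (N_n) ℕ-valued random variables. Suppose (a) there exists a sequence (k_n) of positive reals with k_n → ∞ such that N_n/k_n → 1 in probability, and (b) for every ε > 0 there exist δ > 0 and n₀ such that for all n ≥ n₀, P[max_{⌈(1-δ)n⌉ ≤ m ≤ ⌊(1+δ)n⌋} d(ξ_n, ξ_m) ≥ ε] < ε. Then if ξ_n converges weakly to ξ, also ξ_{N_n} converges weakly to ξ. -/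
open MeasureTheory Filter Topology

/-- Probability that the oscillation max_{⌈(1-δ)n⌉ ≤ m ≤ ⌊(1+δ)n⌋} d(ξ_n, ξ_m) is ≥ ε. -/
noncomputable def oscProb {Ω X : Type*} [MeasurableSpace Ω] [PseudoMetricSpace X]
    (P : Measure Ω) (ξ : ℕ → Ω → X) (δ ε : ℝ) (n : ℕ) : ℝ :=
  (P {ω | ∃ m : ℕ, ⌈(1 - δ) * (n : ℝ)⌉ ≤ (m : ℤ) ∧ (m : ℤ) ≤ ⌊(1 + δ) * (n : ℝ)⌋ ∧
      ε ≤ dist (ξ n ω) (ξ m ω)}).toReal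

/-- The Anscombe index χ_Ansc⟨(ξ_n)⟩. -/
noncomputable def anscIndex {Ω X : Type*} [MeasurableSpace Ω] [PseudoMetricSpace X]
    (P : Measure Ω) (ξ : ℕ → Ω → X) : ℝ :=
  ⨆ ε : {x : ℝ // 0 < x}, ⨅ δ : {x : ℝ // 0 < x},
    limsup (fun n => oscProb P ξ δ ε n) atTop

/-- Anscombe's condition. -/
def AnscombeCond {Ω X : Type*} [MeasurableSpace Ω] [PseudoMetricSpace X]
    (P : Measure Ω) (ξ : ℕ → Ω → X) : Prop :=
  ∀ ε > (0 : ℝ), ∃ δ > (0 : ℝ), ∃ n₀ : ℕ, ∀ n ≥ n₀, oscProb P ξ δ ε n < ε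

/-- λ_w via closed sets. -/
noncomputable def lamW {Ω X : Type*} [MeasurableSpace Ω] [TopologicalSpace X]
    (P : Measure Ω) (ξ : ℕ → Ω → X) (ζ : Ω → X) : ℝ :=
  ⨆ F : {F : Set X // IsClosed F},
    limsup (fun n => (P {ω | ξ n ω ∈ F.1}).toReal - (P {ω | ζ ω ∈ F.1}).toReal) atTop

/-- λ_P, the index of convergence in probability. -/
noncomputable def lamP {Ω X : Type*} [MeasurableSpace Ω] [PseudoMetricSpace X]
    (P : Measure Ω) (ξ : ℕ → Ω → X) (ζ : Ω → X) : ℝ :=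
  ⨆ ε : {x : ℝ // 0 < x},
    limsup (fun n => (P {ω | ε.1 ≤ dist (ζ ω) (ξ n ω)}).toReal) atTop

/-- Weak convergence of X-valued random variables. -/
def WeakConv {Ω X : Type*} [MeasurableSpace Ω] [TopologicalSpace X]
    (P : Measure Ω) (ξ : ℕ → Ω → X) (ζ : Ω → X) : Prop :=
  ∀ f : X → ℝ, Continuous f → (∃ C, ∀ x, |f x| ≤ C) →
    Tendsto (fun n => ∫ ω, f (ξ n ω) ∂P) atTop (𝓝 (∫ ω, f (ζ ω) ∂P))


open scoped NNReal ENNReal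

/-- Portmanteau converse via closed sets, for probability measures on a metric space. -/
lemma aux_tendsto_of_forall_isClosed_limsup_le {X : Type*} [MeasurableSpace X] [MetricSpace X]
    [OpensMeasurableSpace X] {μ : ProbabilityMeasure X} {μs : ℕ → ProbabilityMeasure X}
    (h : ∀ F : Set X, IsClosed F →
      atTop.limsup (fun n => (μs n : Measure X) F) ≤ (μ : Measure X) F) :
    Tendsto μs atTop (𝓝 μ) := by
  apply MeasureTheory.tendsto_of_forall_isOpen_le_liminf
  intro G G_open
  have h' : (μ : Measure X) G ≤ atTop.liminf fun i => (μs i : Measure X) G :=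
    (MeasureTheory.limsup_measure_closed_le_iff_liminf_measure_open_ge
      (μ := (μ : Measure X)) (μs := fun n => (μs n : Measure X))).mp (fun F hF => h F hF) G G_open
  have aux : ENNReal.ofNNReal (liminf (fun i ↦ μs i G) atTop) =
      liminf (fun i => ((μs i G : ℝ≥0) : ℝ≥0∞)) atTop := by
    refine Monotone.map_liminf_of_continuousAt (F := atTop) ENNReal.coe_mono (μs · G)
      ENNReal.continuous_coe.continuousAt ?_ ?_
    · exact IsBoundedUnder.isCoboundedUnder_ge ⟨1, by simp⟩
    · exact ⟨0, by simp⟩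
  rw [← ENNReal.coe_le_coe, aux]
  simpa [ProbabilityMeasure.ennreal_coeFn_eq_coeFn_toMeasure] using h'

theorem anscombe_theorem {Ω X : Type*} [MeasurableSpace Ω] [MetricSpace X]
    [TopologicalSpace.SeparableSpace X] [MeasurableSpace X] [BorelSpace X]
    (P : Measure Ω) [IsProbabilityMeasure P]
    (ξ : ℕ → Ω → X) (ζ : Ω → X) (N : ℕ → Ω → ℕ)
    (hξ : ∀ n, Measurable (ξ n)) (hζ : Measurable ζ) (hN : ∀ n, Measurable (N n))
    (k : ℕ → ℝ) (hkpos : ∀ n, 0 < k n) (hktop : Tendsto k atTop atTop)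
    (hprob : ∀ ε > (0 : ℝ),
      Tendsto (fun n => (P {ω | ε ≤ |(N n ω : ℝ) / k n - 1|}).toReal) atTop (𝓝 0))
    (hAnsc : AnscombeCond P ξ)
    (hw : WeakConv P ξ ζ) :
    WeakConv P (fun n ω => ξ (N n ω) ω) ζ := by
  classical
  set η : ℕ → Ω → X := fun n ω => ξ (N n ω) ω with hη
  have hηm : ∀ n, Measurable (η n) := by
    intro n s hs
    have : η n ⁻¹' s = ⋃ m, ({ω | N n ω = m} ∩ ξ m ⁻¹' s) := by
      ext ω
      simp only [Set.mem_preimage, Set.mem_iUnion, Set.mem_inter_iff, Set.mem_setOf_eq, hη]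
      exact ⟨fun h => ⟨N n ω, rfl, h⟩, fun ⟨m, hm, h⟩ => hm ▸ h⟩
    rw [this]
    exact MeasurableSet.iUnion fun m =>
      ((hN n (measurableSet_singleton m)).inter (hξ m hs))
  let μξ : ℕ → ProbabilityMeasure X := fun n =>
    ⟨P.map (ξ n), Measure.isProbabilityMeasure_map (hξ n).aemeasurable⟩
  let μη : ℕ → ProbabilityMeasure X := fun n =>
    ⟨P.map (η n), Measure.isProbabilityMeasure_map (hηm n).aemeasurable⟩
  let μζ : ProbabilityMeasure X := ⟨P.map ζ, Measure.isProbabilityMeasure_map hζ.aemeasurable⟩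
  -- reduce to convergence of pushforward probability measures
  suffices htend : Tendsto μη atTop (𝓝 μζ) by
    intro f hf hb
    obtain ⟨C, hC⟩ := hb
    let g : BoundedContinuousFunction X ℝ :=
      BoundedContinuousFunction.ofNormedAddCommGroup f hf C
        (fun x => by simpa [Real.norm_eq_abs] using hC x)
    have hg := ProbabilityMeasure.tendsto_iff_forall_integral_tendsto.mp htend g
    have h1 : ∀ n, ∫ x, g x ∂(μη n : Measure X) = ∫ ω, f (η n ω) ∂P := fun n =>
      integral_map (hηm n).aemeasurable hf.aestronglyMeasurable
    have h2 : ∫ x, g x ∂(μζ : Measure X) = ∫ ω, f (ζ ω) ∂P :=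
      integral_map hζ.aemeasurable hf.aestronglyMeasurable
    simpa only [h1, h2] using hg
  -- the pushforwards of ξ converge weakly
  have hξtend : Tendsto μξ atTop (𝓝 μζ) := by
    rw [ProbabilityMeasure.tendsto_iff_forall_integral_tendsto]
    intro g
    have hgb : ∃ C, ∀ x, |g x| ≤ C :=
      ⟨‖g‖, fun x => by simpa [Real.norm_eq_abs] using g.norm_coe_le_norm x⟩
    have := hw g g.continuous hgb
    have h1 : ∀ n, ∫ x, g x ∂(μξ n : Measure X) = ∫ ω, g (ξ n ω) ∂P := fun n =>
      integral_map (hξ n).aemeasurable g.continuous.aestronglyMeasurable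
    have h2 : ∫ x, g x ∂(μζ : Measure X) = ∫ ω, g (ζ ω) ∂P :=
      integral_map hζ.aemeasurable g.continuous.aestronglyMeasurable
    simpa only [h1, h2] using this
  -- subsequence along m n = ⌈k n⌉₊
  set m : ℕ → ℕ := fun n => ⌈k n⌉₊ with hm
  have hm_top : Tendsto m atTop atTop := tendsto_nat_ceil_atTop.comp hktop
  have hsub : Tendsto (fun n => μξ (m n)) atTop (𝓝 μζ) := hξtend.comp hm_top
  apply aux_tendsto_of_forall_isClosed_limsup_le
  intro F hF
  show atTop.limsup (fun n => P.map (η n) F) ≤ P.map ζ F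
  have hmapη : ∀ n, P.map (η n) F = P (η n ⁻¹' F) := fun n =>
    Measure.map_apply (hηm n) hF.measurableSet
  have hmapζ : P.map ζ F = P (ζ ⁻¹' F) := Measure.map_apply hζ hF.measurableSet
  simp only [hmapη, hmapζ]
  -- key quantitative estimate
  have key : ∀ ε : ℝ, 0 < ε → atTop.limsup (fun n => P (η n ⁻¹' F)) ≤
      P (ζ ⁻¹' Metric.cthickening ε F) + (ENNReal.ofReal ε + ENNReal.ofReal ε + ENNReal.ofReal ε) := by
    intro ε hε
    obtain ⟨δ, hδ, n₀, hosc⟩ := hAnsc ε hε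
    have hcl : IsClosed (Metric.cthickening ε F) := Metric.isClosed_cthickening
    -- the three exceptional events
    set C : ℕ → Set Ω := fun n => {ω | δ / 2 ≤ |(N n ω : ℝ) / k n - 1|} with hCdef
    set D : ℕ → Set Ω := fun n => {ω | ∃ m' : ℕ,
        ⌈(1 - δ) * ((m n : ℕ) : ℝ)⌉ ≤ (m' : ℤ) ∧ (m' : ℤ) ≤ ⌊(1 + δ) * ((m n : ℕ) : ℝ)⌋ ∧
        ε ≤ dist (ξ (m n) ω) (ξ m' ω)} with hDdef
    have hCev : ∀ᶠ n in atTop, P (C n) ≤ ENNReal.ofReal ε := by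
      have hC := hprob (δ / 2) (by positivity)
      filter_upwards [hC.eventually_lt_const hε] with n hn
      exact (ENNReal.le_ofReal_iff_toReal_le (measure_ne_top P _) hε.le).mpr hn.le
    have hDev : ∀ᶠ n in atTop, P (D n) ≤ ENNReal.ofReal ε := by
      filter_upwards [hm_top.eventually_ge_atTop n₀] with n hn
      exact (ENNReal.le_ofReal_iff_toReal_le (measure_ne_top P _) hε.le).mpr
        (hosc (m n) hn).le
    have hlimB : atTop.limsup (fun n => P (ξ (m n) ⁻¹' Metric.cthickening ε F)) ≤
        P (ζ ⁻¹' Metric.cthickening ε F) := by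
      have hls := ProbabilityMeasure.limsup_measure_closed_le_of_tendsto hsub hcl
      have e1 : (fun n => ((μξ (m n) : Measure X)) (Metric.cthickening ε F)) =
          fun n => P (ξ (m n) ⁻¹' Metric.cthickening ε F) :=
        funext fun n => Measure.map_apply (hξ _) hcl.measurableSet
      have e2 : (μζ : Measure X) (Metric.cthickening ε F) =
          P (ζ ⁻¹' Metric.cthickening ε F) := Measure.map_apply hζ hcl.measurableSet
      rwa [e1, e2] at hls
    have hBlt : ∀ᶠ n in atTop, P (ξ (m n) ⁻¹' Metric.cthickening ε F) <
        P (ζ ⁻¹' Metric.cthickening ε F) + ENNReal.ofReal ε :=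
      eventually_lt_of_limsup_lt (lt_of_le_of_lt hlimB
        (ENNReal.lt_add_right (measure_ne_top _ _) (ENNReal.ofReal_pos.mpr hε).ne'))
    have hktail : ∀ᶠ n in atTop, 2 ≤ δ * k n := by
      filter_upwards [hktop.eventually_ge_atTop (2 / δ)] with n hn
      rw [div_le_iff₀ hδ] at hn
      nlinarith
    have hincl : ∀ᶠ n in atTop, (η n ⁻¹' F) ⊆
        (ξ (m n) ⁻¹' Metric.cthickening ε F) ∪ C n ∪ D n := by
      filter_upwards [hktail] with n hk2 ω hω
      by_cases hCmem : ω ∈ C n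
      · exact Or.inl (Or.inr hCmem)
      by_cases hDmem : ω ∈ D n
      · exact Or.inr hDmem
      refine Or.inl (Or.inl ?_)
      have hC' : |(N n ω : ℝ) / k n - 1| < δ / 2 := lt_of_not_ge hCmem
      obtain ⟨hl, hr⟩ := abs_lt.mp hC'
      have hNlt : (N n ω : ℝ) < (1 + δ / 2) * k n :=
        (div_lt_iff₀ (hkpos n)).mp (by linarith)
      have hNgt : (1 - δ / 2) * k n < (N n ω : ℝ) :=
        (lt_div_iff₀ (hkpos n)).mp (by linarith)
      have hmk : k n ≤ ((m n : ℕ) : ℝ) := Nat.le_ceil _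
      have hup : ((N n ω : ℕ) : ℤ) ≤ ⌊(1 + δ) * ((m n : ℕ) : ℝ)⌋ := by
        rw [Int.le_floor]
        push_cast
        nlinarith [hkpos n]
      have hlow : ⌈(1 - δ) * ((m n : ℕ) : ℝ)⌉ ≤ ((N n ω : ℕ) : ℤ) := by
        rw [Int.ceil_le]
        push_cast
        rcases le_or_gt (1 - δ) 0 with h1δ | h1δ
        · nlinarith [(Nat.cast_nonneg (N n ω) : (0:ℝ) ≤ ((N n ω : ℕ) : ℝ)), (Nat.cast_nonneg (m n) : (0:ℝ) ≤ ((m n : ℕ) : ℝ))]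
        · have hm1 : ((m n : ℕ) : ℝ) < k n + 1 := Nat.ceil_lt_add_one (hkpos n).le
          nlinarith [hkpos n]
      have hD' : ∀ m' : ℕ, ⌈(1 - δ) * ((m n : ℕ) : ℝ)⌉ ≤ (m' : ℤ) →
          (m' : ℤ) ≤ ⌊(1 + δ) * ((m n : ℕ) : ℝ)⌋ → dist (ξ (m n) ω) (ξ m' ω) < ε := by
        intro m' h1 h2
        by_contra hcon
        exact hDmem ⟨m', h1, h2, le_of_not_gt hcon⟩
      have hdist := hD' (N n ω) hlow hup
      exact Metric.mem_cthickening_of_dist_le _ _ _ _ hω hdist.le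
    have hfinal : ∀ᶠ n in atTop, P (η n ⁻¹' F) ≤
        P (ζ ⁻¹' Metric.cthickening ε F) +
          (ENNReal.ofReal ε + ENNReal.ofReal ε + ENNReal.ofReal ε) := by
      filter_upwards [hincl, hCev, hDev, hBlt] with n h1 h2 h3 h4
      calc P (η n ⁻¹' F) ≤ P ((ξ (m n) ⁻¹' Metric.cthickening ε F) ∪ C n ∪ D n) :=
            measure_mono h1
        _ ≤ P (ξ (m n) ⁻¹' Metric.cthickening ε F) + P (C n) + P (D n) :=
            le_trans (measure_union_le _ _) (add_le_add_left (measure_union_le _ _) _)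
        _ ≤ (P (ζ ⁻¹' Metric.cthickening ε F) + ENNReal.ofReal ε) + ENNReal.ofReal ε
              + ENNReal.ofReal ε := add_le_add (add_le_add h4.le h2) h3
        _ = P (ζ ⁻¹' Metric.cthickening ε F) +
              (ENNReal.ofReal ε + ENNReal.ofReal ε + ENNReal.ofReal ε) := by ring
    exact limsup_le_of_le (h := hfinal)
  -- let ε → 0
  have hνfin : IsProbabilityMeasure (P.map ζ) := Measure.isProbabilityMeasure_map hζ.aemeasurable
  have hcth : Tendsto (fun ε : ℝ => P (ζ ⁻¹' Metric.cthickening ε F)) (𝓝 0) (𝓝 (P (ζ ⁻¹' F))) := by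
    have h0 : Tendsto (fun ε : ℝ => P.map ζ (Metric.cthickening ε F)) (𝓝 0) (𝓝 (P.map ζ F)) :=
      tendsto_measure_cthickening_of_isClosed
        ⟨1, one_pos, measure_ne_top _ _⟩ hF
    have e1 : (fun ε : ℝ => P.map ζ (Metric.cthickening ε F)) =
        fun ε : ℝ => P (ζ ⁻¹' Metric.cthickening ε F) := funext fun ε =>
      Measure.map_apply hζ (Metric.isClosed_cthickening).measurableSet
    rw [e1, hmapζ] at h0
    exact h0
  have hofReal : Tendsto (fun ε : ℝ => ENNReal.ofReal ε) (𝓝 0) (𝓝 0) := by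
    simpa using (ENNReal.continuous_ofReal.tendsto 0)
  have hsum : Tendsto (fun ε : ℝ => P (ζ ⁻¹' Metric.cthickening ε F) +
      (ENNReal.ofReal ε + ENNReal.ofReal ε + ENNReal.ofReal ε)) (𝓝[>] 0)
      (𝓝 (P (ζ ⁻¹' F))) := by
    have : Tendsto (fun ε : ℝ => P (ζ ⁻¹' Metric.cthickening ε F) +
        (ENNReal.ofReal ε + ENNReal.ofReal ε + ENNReal.ofReal ε)) (𝓝 0)
        (𝓝 (P (ζ ⁻¹' F) + (0 + 0 + 0))) := by
      exact Tendsto.add hcth (Tendsto.add (Tendsto.add hofReal hofReal) hofReal)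
    simpa using this.mono_left nhdsWithin_le_nhds
  exact ge_of_tendsto hsum (eventually_nhdsWithin_of_forall fun ε hε => key ε hε)
end

section
/- Let X be a separable metric space and ξ, (ξ_n) X-valued random variables. Then sup over closed F of limsup_n (P[ξ_n ∈ F] − P[ξ ∈ F]) equals sup over α > 0 of limsup_n sup over Borel A of (P[ξ ∈ A] − P[ξ_n ∈ A^(α)]), where A^(α) denotes the open α-enlargement {x : d(x,A) < α} of A. -/
open MeasureTheory Filter Topology

/-! ### Auxiliary lemmas -/

/-- Probability (as a real number) that a random element lies in a set. -/
noncomputable def pr {Ω X : Type*} [MeasurableSpace Ω]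
    (P : Measure Ω) (g : Ω → X) (S : Set X) : ℝ :=
  (P {ω | g ω ∈ S}).toReal

section PrLemmas

variable {Ω X : Type*} [MeasurableSpace Ω] [MeasurableSpace X]
  (P : Measure Ω) [IsProbabilityMeasure P] (g : Ω → X)

lemma pr_nonneg (S : Set X) : 0 ≤ pr P g S := ENNReal.toReal_nonneg

lemma pr_le_one (S : Set X) : pr P g S ≤ 1 := by
  have := ENNReal.toReal_mono ENNReal.one_ne_top
    (prob_le_one (μ := P) (s := {ω | g ω ∈ S}))
  exact (by simpa using this : (P {ω | g ω ∈ S}).toReal ≤ 1)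

lemma pr_mono {S T : Set X} (h : S ⊆ T) : pr P g S ≤ pr P g T :=
  ENNReal.toReal_mono (measure_ne_top P _) (measure_mono fun ω hω => h hω)

lemma pr_compl (hg : Measurable g) {S : Set X} (hS : MeasurableSet S) :
    pr P g Sᶜ = 1 - pr P g S := by
  unfold pr
  show (P (g ⁻¹' S)ᶜ).toReal = 1 - (P (g ⁻¹' S)).toReal
  rw [prob_compl_eq_one_sub (hg hS),
    ENNReal.toReal_sub_of_le prob_le_one ENNReal.one_ne_top, ENNReal.toReal_one]

lemma pr_subadd {S T U : Set X} (h : S ⊆ T ∪ U) :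
    pr P g S ≤ pr P g T + pr P g U := by
  unfold pr
  have h1 : P {ω | g ω ∈ S} ≤ P {ω | g ω ∈ T} + P {ω | g ω ∈ U} :=
    le_trans (measure_mono fun ω hω => h hω) (measure_union_le _ _)
  have h2 := ENNReal.toReal_mono
    (ENNReal.add_ne_top.mpr ⟨measure_ne_top P _, measure_ne_top P _⟩) h1
  rwa [ENNReal.toReal_add (measure_ne_top P _) (measure_ne_top P _)] at h2

lemma pr_empty : pr P g (∅ : Set X) = 0 := by
  unfold pr; simp

end PrLemmas

lemma le_of_forall_pos_le_add' {a b : ℝ} (h : ∀ ε > (0:ℝ), a ≤ b + ε) : a ≤ b := by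
  by_contra hab
  push_neg at hab
  have := h ((a - b) / 2) (by linarith)
  linarith

theorem lamW_closed_eq_enlargement {Ω X : Type*} [MeasurableSpace Ω] [MetricSpace X]
    [TopologicalSpace.SeparableSpace X] [MeasurableSpace X] [BorelSpace X]
    (P : Measure Ω) [IsProbabilityMeasure P]
    (ξ : ℕ → Ω → X) (ζ : Ω → X)
    (hξ : ∀ n, Measurable (ξ n)) (hζ : Measurable ζ) :
    (⨆ F : {F : Set X // IsClosed F},
        limsup (fun n =>
          (P {ω | ξ n ω ∈ F.1}).toReal - (P {ω | ζ ω ∈ F.1}).toReal) atTop)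
      = ⨆ α : {x : ℝ // 0 < x},
          limsup (fun n => ⨆ A : {A : Set X // MeasurableSet A},
            (P {ω | ζ ω ∈ A.1}).toReal
              - (P {ω | ξ n ω ∈ Metric.thickening α.1 A.1}).toReal) atTop := by
  classical
  have hXne : Nonempty X := by
    by_contra h
    rw [not_nonempty_iff] at h
    have hΩ : IsEmpty Ω := ⟨fun ω => h.false (ζ ω)⟩
    have h1 : P Set.univ = 1 := measure_univ
    rw [Set.univ_eq_empty_iff.mpr hΩ] at h1
    simp at h1
  haveI hNF : Nonempty {F : Set X // IsClosed F} := ⟨⟨∅, isClosed_empty⟩⟩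
  haveI hNA : Nonempty {A : Set X // MeasurableSet A} := ⟨⟨∅, MeasurableSet.empty⟩⟩
  haveI hNα : Nonempty {x : ℝ // 0 < x} := ⟨⟨1, one_pos⟩⟩
  show (⨆ F : {F : Set X // IsClosed F},
        limsup (fun n => pr P (ξ n) F.1 - pr P ζ F.1) atTop)
      = ⨆ α : {x : ℝ // 0 < x},
          limsup (fun n => ⨆ A : {A : Set X // MeasurableSet A},
            pr P ζ A.1 - pr P (ξ n) (Metric.thickening α.1 A.1)) atTop
  -- basic bounds
  have hbd : ∀ (g₁ g₂ : Ω → X) (S T : Set X),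
      (-1 : ℝ) ≤ pr P g₁ S - pr P g₂ T ∧ pr P g₁ S - pr P g₂ T ≤ 1 := by
    intro g₁ g₂ S T
    have h1 := pr_nonneg P g₁ S
    have h2 := pr_le_one P g₂ T
    have h3 := pr_le_one P g₁ S
    have h4 := pr_nonneg P g₂ T
    constructor <;> linarith
  have hBdd : ∀ (f : ℕ → ℝ), (∀ n, f n ≤ 1) → IsBoundedUnder (· ≤ ·) atTop f :=
    fun f h => isBoundedUnder_of ⟨1, h⟩
  have hCobdd : ∀ (f : ℕ → ℝ) (x : ℝ), (∀ n, x ≤ f n) → IsCoboundedUnder (· ≤ ·) atTop f :=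
    fun f x h => isCoboundedUnder_le_of_le atTop h
  have hlimsup_le_one : ∀ (f : ℕ → ℝ), (∀ n, -1 ≤ f n) → (∀ n, f n ≤ 1) →
      limsup f atTop ≤ 1 :=
    fun f h0 h1 => limsup_le_of_le (hCobdd f (-1) h0) (Eventually.of_forall h1)
  -- boundedness of the left-hand family
  have hbddL : BddAbove (Set.range fun F : {F : Set X // IsClosed F} =>
      limsup (fun n => pr P (ξ n) F.1 - pr P ζ F.1) atTop) := by
    refine ⟨1, ?_⟩
    rintro _ ⟨F, rfl⟩
    exact hlimsup_le_one _ (fun n => (hbd _ _ _ _).1) (fun n => (hbd _ _ _ _).2)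
  -- inner suprema over measurable sets
  have hbddA : ∀ (r : ℝ) (n : ℕ), BddAbove (Set.range
      fun A : {A : Set X // MeasurableSet A} =>
        pr P ζ A.1 - pr P (ξ n) (Metric.thickening r A.1)) := by
    intro r n
    exact ⟨1, by rintro _ ⟨A, rfl⟩; exact (hbd _ _ _ _).2⟩
  have hsup0 : ∀ (r : ℝ) (n : ℕ), (0:ℝ) ≤ ⨆ A : {A : Set X // MeasurableSet A},
      pr P ζ A.1 - pr P (ξ n) (Metric.thickening r A.1) := by
    intro r n
    refine le_trans ?_ (le_ciSup (hbddA r n) ⟨∅, MeasurableSet.empty⟩)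
    simp [pr_empty, Metric.thickening_empty]
  have hsup1 : ∀ (r : ℝ) (n : ℕ), (⨆ A : {A : Set X // MeasurableSet A},
      pr P ζ A.1 - pr P (ξ n) (Metric.thickening r A.1)) ≤ 1 :=
    fun r n => ciSup_le fun A => (hbd _ _ _ _).2
  -- boundedness of the right-hand family
  have hbddR : BddAbove (Set.range fun α : {x : ℝ // 0 < x} =>
      limsup (fun n => ⨆ A : {A : Set X // MeasurableSet A},
        pr P ζ A.1 - pr P (ξ n) (Metric.thickening α.1 A.1)) atTop) := by
    refine ⟨1, ?_⟩
    rintro _ ⟨α, rfl⟩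
    exact hlimsup_le_one _ (fun n => le_trans (by norm_num) (hsup0 α.1 n)) (hsup1 α.1)
  -- limsup of (f - const)
  have hlimsub : ∀ (f : ℕ → ℝ) (c : ℝ), (∀ n, 0 ≤ f n) → (∀ n, f n ≤ 1) →
      limsup (fun n => f n - c) atTop = limsup f atTop - c := by
    intro f c h0 h1
    simp only [sub_eq_add_neg]
    exact limsup_add_const atTop f (-c) (hBdd f h1) (hCobdd f 0 h0)
  apply le_antisymm
  · -- LHS ≤ RHS
    refine ciSup_le fun F => ?_
    have heq : limsup (fun n => pr P (ξ n) F.1 - pr P ζ F.1) atTop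
        = limsup (fun n => pr P (ξ n) F.1) atTop - pr P ζ F.1 :=
      hlimsub _ _ (fun n => pr_nonneg P (ξ n) F.1) (fun n => pr_le_one P (ξ n) F.1)
    rw [heq]
    refine le_of_forall_pos_le_add' fun ε hε => ?_
    -- continuity of thickenings from above
    haveI : IsProbabilityMeasure (P.map ζ) := Measure.isProbabilityMeasure_map hζ.aemeasurable
    have hμ : ∀ r : ℝ, pr P ζ (Metric.thickening r F.1)
        = ((P.map ζ) (Metric.thickening r F.1)).toReal := by
      intro r
      unfold pr
      rw [Measure.map_apply hζ Metric.isOpen_thickening.measurableSet]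
      rfl
    have hqF : pr P ζ F.1 = ((P.map ζ) F.1).toReal := by
      unfold pr
      rw [Measure.map_apply hζ F.2.measurableSet]
      rfl
    have htend : Tendsto (fun r => pr P ζ (Metric.thickening r F.1)) (𝓝[>] (0:ℝ))
        (𝓝 (pr P ζ F.1)) := by
      have h1 := tendsto_measure_thickening_of_isClosed (μ := P.map ζ) (s := F.1)
        ⟨1, one_pos, measure_ne_top _ _⟩ F.2
      have h2 := (ENNReal.tendsto_toReal (measure_ne_top (P.map ζ) F.1)).comp h1
      rw [hqF]
      exact h2.congr fun r => (hμ r).symm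
    have hlt : ∀ᶠ r in 𝓝[>] (0:ℝ),
        pr P ζ (Metric.thickening r F.1) < pr P ζ F.1 + ε :=
      htend.eventually_lt_const (by linarith)
    obtain ⟨r, hr0, hrlt⟩ := (eventually_mem_nhdsWithin.and hlt).exists
    have hr0' : (0:ℝ) < r := hr0
    -- key pointwise inequality using A = (thickening r F)ᶜ
    have key : ∀ n, pr P (ξ n) F.1 - pr P ζ (Metric.thickening r F.1) ≤
        ⨆ A : {A : Set X // MeasurableSet A},
          pr P ζ A.1 - pr P (ξ n) (Metric.thickening r A.1) := by
      intro n
      have hAαm : MeasurableSet (Metric.thickening r F.1)ᶜ :=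
        Metric.isOpen_thickening.measurableSet.compl
      have hsubset : Metric.thickening r (Metric.thickening r F.1)ᶜ ⊆ F.1ᶜ := by
        intro x hx
        rw [Metric.mem_thickening_iff] at hx
        obtain ⟨z, hz, hdz⟩ := hx
        intro hxF
        apply hz
        rw [Metric.mem_thickening_iff]
        exact ⟨x, hxF, by rw [dist_comm]; exact hdz⟩
      have h1 : pr P ζ (Metric.thickening r F.1)ᶜ
          = 1 - pr P ζ (Metric.thickening r F.1) :=
        pr_compl P ζ hζ Metric.isOpen_thickening.measurableSet
      have h2 : pr P (ξ n) (Metric.thickening r (Metric.thickening r F.1)ᶜ)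
          ≤ 1 - pr P (ξ n) F.1 := by
        have h3 := pr_mono P (ξ n) hsubset
        rwa [pr_compl P (ξ n) (hξ n) F.2.measurableSet] at h3
      refine le_trans ?_ (le_ciSup (hbddA r n) ⟨(Metric.thickening r F.1)ᶜ, hAαm⟩)
      linarith
    have h3 : limsup (fun n => pr P (ξ n) F.1 - pr P ζ (Metric.thickening r F.1)) atTop
        = limsup (fun n => pr P (ξ n) F.1) atTop - pr P ζ (Metric.thickening r F.1) :=
      hlimsub _ _ (fun n => pr_nonneg P (ξ n) F.1) (fun n => pr_le_one P (ξ n) F.1)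
    have h4 : limsup (fun n => pr P (ξ n) F.1 - pr P ζ (Metric.thickening r F.1)) atTop
        ≤ limsup (fun n => ⨆ A : {A : Set X // MeasurableSet A},
            pr P ζ A.1 - pr P (ξ n) (Metric.thickening r A.1)) atTop :=
      limsup_le_limsup (Eventually.of_forall key)
        (hCobdd _ (-1) fun n => (hbd _ _ _ _).1) (hBdd _ (hsup1 r))
    have h5 : limsup (fun n => ⨆ A : {A : Set X // MeasurableSet A},
          pr P ζ A.1 - pr P (ξ n) (Metric.thickening r A.1)) atTop
        ≤ ⨆ α : {x : ℝ // 0 < x},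
          limsup (fun n => ⨆ A : {A : Set X // MeasurableSet A},
            pr P ζ A.1 - pr P (ξ n) (Metric.thickening α.1 A.1)) atTop :=
      le_ciSup hbddR ⟨r, hr0'⟩
    linarith
  · -- RHS ≤ LHS
    refine ciSup_le fun α => ?_
    obtain ⟨r, hr⟩ := α
    refine le_of_forall_pos_le_add' fun ε hε => ?_
    -- dense sequence and covering balls
    set e : ℕ → X := TopologicalSpace.denseSeq X with he_def
    have he : DenseRange e := TopologicalSpace.denseRange_denseSeq X
    set B : ℕ → Set X := fun i => Metric.ball (e i) (r/4) with hB
    set W : ℕ → Set Ω := fun k => ζ ⁻¹' (⋃ i ∈ Finset.range k, B i) with hW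
    have hWmono : Monotone W := by
      intro k l hkl
      apply Set.preimage_mono
      refine Set.biUnion_subset_biUnion_left ?_
      intro i hi
      exact Finset.mem_range.mpr (lt_of_lt_of_le (Finset.mem_range.mp hi) hkl)
    have hWunion : ⋃ k, W k = Set.univ := by
      ext ω
      simp only [Set.mem_iUnion, Set.mem_univ, iff_true]
      obtain ⟨i, hi⟩ := Metric.denseRange_iff.mp he (ζ ω) (r/4) (by linarith)
      refine ⟨i+1, ?_⟩
      simp only [hW, Set.mem_preimage, Set.mem_iUnion]
      exact ⟨i, Finset.mem_range.mpr (Nat.lt_succ_self i), Metric.mem_ball.mpr hi⟩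
    have htendW : Tendsto (fun k => (P (W k)).toReal) atTop (𝓝 1) := by
      have h1 : Tendsto (fun k => P (W k)) atTop (𝓝 (P (⋃ k, W k))) :=
        tendsto_measure_iUnion_atTop hWmono
      rw [hWunion, measure_univ] at h1
      have h2 := (ENNReal.tendsto_toReal ENNReal.one_ne_top).comp h1
      simpa [Function.comp_def] using h2
    obtain ⟨k, hk⟩ := (htendW.eventually_const_lt (by linarith : 1 - ε/2 < 1)).exists
    -- the finite family of closed sets
    set U : Finset ℕ → Set X := fun J => ⋃ i ∈ J, B i with hU
    set G : Finset ℕ → Set X := fun J => (Metric.thickening (r/2) (U J))ᶜ with hG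
    have hGclosed : ∀ J, IsClosed (G J) := fun J => Metric.isOpen_thickening.isClosed_compl
    have hGmeas : ∀ J, MeasurableSet (G J) := fun J => (hGclosed J).measurableSet
    have hUopen : ∀ J : Finset ℕ, IsOpen (U J) :=
      fun J => isOpen_biUnion fun i _ => Metric.isOpen_ball
    have hβ : ∀ J : Finset ℕ, limsup (fun n => pr P (ξ n) (G J) - pr P ζ (G J)) atTop
        ≤ ⨆ F : {F : Set X // IsClosed F},
          limsup (fun n => pr P (ξ n) F.1 - pr P ζ F.1) atTop :=
      fun J => le_ciSup hbddL ⟨G J, hGclosed J⟩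
    have hev : ∀ᶠ n in atTop, ∀ J ∈ (Finset.range k).powerset,
        pr P (ξ n) (G J) - pr P ζ (G J)
          < (⨆ F : {F : Set X // IsClosed F},
              limsup (fun n => pr P (ξ n) F.1 - pr P ζ F.1) atTop) + ε/2 := by
      rw [eventually_all_finset]
      intro J hJ
      exact eventually_lt_of_limsup_lt (lt_of_le_of_lt (hβ J) (by linarith))
        (hBdd _ fun n => (hbd _ _ _ _).2)
    have hmain : ∀ᶠ n in atTop,
        (⨆ A : {A : Set X // MeasurableSet A},
          pr P ζ A.1 - pr P (ξ n) (Metric.thickening r A.1))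
        ≤ (⨆ F : {F : Set X // IsClosed F},
            limsup (fun n => pr P (ξ n) F.1 - pr P ζ F.1) atTop) + ε := by
      filter_upwards [hev] with n hn
      refine ciSup_le fun A => ?_
      set J : Finset ℕ := (Finset.range k).filter (fun i => (B i ∩ A.1).Nonempty) with hJdef
      have hJmem : J ∈ (Finset.range k).powerset :=
        Finset.mem_powerset.mpr (Finset.filter_subset _ _)
      -- A is covered by U J together with the complement of the k-th covering stage
      have hAsub : A.1 ⊆ U J ∪ (⋃ i ∈ Finset.range k, B i)ᶜ := by
        intro x hx
        by_cases hxW : x ∈ ⋃ i ∈ Finset.range k, B i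
        · left
          simp only [Set.mem_iUnion] at hxW
          obtain ⟨i, hik, hxB⟩ := hxW
          simp only [hU, Set.mem_iUnion]
          exact ⟨i, Finset.mem_filter.mpr ⟨hik, ⟨x, hxB, hx⟩⟩, hxB⟩
        · right; exact hxW
      have h1 : pr P ζ A.1 ≤ pr P ζ (U J) + ε/2 := by
        have hs := pr_subadd P ζ hAsub
        have h2 : pr P ζ (⋃ i ∈ Finset.range k, B i)ᶜ ≤ ε/2 := by
          have hUk : MeasurableSet (⋃ i ∈ Finset.range k, B i) :=
            (isOpen_biUnion fun i _ => (Metric.isOpen_ball : IsOpen (B i))).measurableSet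
          rw [pr_compl P ζ hζ hUk]
          have h3 : pr P ζ (⋃ i ∈ Finset.range k, B i) = (P (W k)).toReal := rfl
          linarith
        linarith
      -- thickening of U J is inside the thickening of A
      have hth : Metric.thickening (r/2) (U J) ⊆ Metric.thickening r A.1 := by
        intro x hx
        rw [Metric.mem_thickening_iff] at hx ⊢
        obtain ⟨z, hz, hdz⟩ := hx
        simp only [hU, Set.mem_iUnion] at hz
        obtain ⟨i, hiJ, hzB⟩ := hz
        have hfil := Finset.mem_filter.mp hiJ
        obtain ⟨a, haBA⟩ := hfil.2
        have haB : a ∈ B i := haBA.1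
        have haA : a ∈ A.1 := haBA.2
        refine ⟨a, haA, ?_⟩
        have d1 : dist z (e i) < r/4 := Metric.mem_ball.mp hzB
        have d2 : dist a (e i) < r/4 := Metric.mem_ball.mp haB
        calc dist x a ≤ dist x z + dist z (e i) + dist (e i) a := dist_triangle4 x z (e i) a
          _ < r/2 + r/4 + r/4 := by
              rw [dist_comm (e i) a]; linarith
          _ = r := by ring
      have h3 : pr P (ξ n) (Metric.thickening (r/2) (U J))
          ≤ pr P (ξ n) (Metric.thickening r A.1) :=
        pr_mono P (ξ n) hth
      have h4 : pr P (ξ n) (Metric.thickening (r/2) (U J)) = 1 - pr P (ξ n) (G J) := by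
        have hc : Metric.thickening (r/2) (U J) = (G J)ᶜ := (compl_compl _).symm
        rw [hc, pr_compl P (ξ n) (hξ n) (hGmeas J)]
      have h5 : pr P ζ (U J) ≤ 1 - pr P ζ (G J) := by
        have hGsub : G J ⊆ (U J)ᶜ :=
          Set.compl_subset_compl.mpr (Metric.self_subset_thickening (by linarith) _)
        have h6 := pr_mono P ζ hGsub
        rw [pr_compl P ζ hζ (hUopen J).measurableSet] at h6
        linarith
      have h7 := hn J hJmem
      linarith
    exact limsup_le_of_le (hCobdd _ 0 (hsup0 r)) hmain
end

section
/- Let X be a separable metric space and ξ, (ξ_n) X-valued random variables. Then sup over open G of limsup_n (P[ξ ∈ G] − P[ξ_n ∈ G]) equals sup over Borel sets A with P[ξ ∈ ∂A] = 0 of limsup_n |P[ξ ∈ A] − P[ξ_n ∈ A]|, where ∂A is the topological boundary of A. -/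
open MeasureTheory Filter Topology

section Aux

open Set


lemma aux_bdd_le {f : ℕ → ℝ} {c : ℝ} (h : ∀ n, f n ≤ c) :
    IsBoundedUnder (· ≤ ·) atTop f := Filter.isBoundedUnder_of ⟨c, h⟩

lemma aux_bdd_ge {f : ℕ → ℝ} {c : ℝ} (h : ∀ n, c ≤ f n) :
    IsBoundedUnder (· ≥ ·) atTop f := Filter.isBoundedUnder_of ⟨c, h⟩

lemma aux_cobdd_ge {f : ℕ → ℝ} {c : ℝ} (h : ∀ n, f n ≤ c) :
    IsCoboundedUnder (· ≥ ·) atTop f := (aux_bdd_le h).isCoboundedUnder_ge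

lemma aux_cobdd_le {f : ℕ → ℝ} {c : ℝ} (h : ∀ n, c ≤ f n) :
    IsCoboundedUnder (· ≤ ·) atTop f := (aux_bdd_ge h).isCoboundedUnder_le

lemma aux_limsup_le {f : ℕ → ℝ} {c : ℝ} (hlb : ∀ n, c ≤ f n) {b : ℝ} (h : ∀ n, f n ≤ b) :
    limsup f atTop ≤ b :=
  Filter.limsup_le_of_le (aux_cobdd_le hlb) (Eventually.of_forall h)

end Aux

section
open Set

theorem lamW_open_eq_continuity_sets {Ω X : Type*} [MeasurableSpace Ω] [MetricSpace X]
    [TopologicalSpace.SeparableSpace X] [MeasurableSpace X] [BorelSpace X]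
    (P : Measure Ω) [IsProbabilityMeasure P]
    (ξ : ℕ → Ω → X) (ζ : Ω → X)
    (hξ : ∀ n, Measurable (ξ n)) (hζ : Measurable ζ) :
    (⨆ G : {G : Set X // IsOpen G},
        limsup (fun n =>
          (P {ω | ζ ω ∈ G.1}).toReal - (P {ω | ξ n ω ∈ G.1}).toReal) atTop)
      = ⨆ A : {A : Set X // MeasurableSet A ∧ P {ω | ζ ω ∈ frontier A} = 0},
          limsup (fun n =>
            |(P {ω | ζ ω ∈ A.1}).toReal - (P {ω | ξ n ω ∈ A.1}).toReal|) atTop := by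
  classical
  have hP1 : ∀ s : Set Ω, (P s).toReal ≤ 1 := fun s => by
    have h1 : P s ≤ 1 := prob_le_one
    simpa using ENNReal.toReal_mono ENNReal.one_ne_top h1
  have hmono : ∀ {s t : Set Ω}, s ⊆ t → (P s).toReal ≤ (P t).toReal := fun {s t} h =>
    ENNReal.toReal_mono (measure_ne_top P t) (measure_mono h)
  set p : Set X → ℝ := fun A => (P {ω | ζ ω ∈ A}).toReal with hpdef
  set q : ℕ → Set X → ℝ := fun n A => (P {ω | ξ n ω ∈ A}).toReal with hqdef
  have hbounds : ∀ (A : Set X) (n : ℕ), -1 ≤ p A - q n A ∧ p A - q n A ≤ 1 := by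
    intro A n
    have h1 := hP1 {ω | ζ ω ∈ A}
    have h2 := hP1 {ω | ξ n ω ∈ A}
    have h3 : (0:ℝ) ≤ (P {ω | ζ ω ∈ A}).toReal := ENNReal.toReal_nonneg
    have h4 : (0:ℝ) ≤ (P {ω | ξ n ω ∈ A}).toReal := ENNReal.toReal_nonneg
    constructor <;> simp only [hpdef, hqdef] <;> linarith
  -- the two suprema are over bounded families
  have hbddL : BddAbove (Set.range fun G : {G : Set X // IsOpen G} =>
      limsup (fun n => p G.1 - q n G.1) atTop) := by
    refine ⟨1, ?_⟩
    rintro x ⟨G, rfl⟩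
    exact aux_limsup_le (fun n => (hbounds G.1 n).1) (fun n => (hbounds G.1 n).2)
  have hbddR : BddAbove (Set.range fun A : {A : Set X // MeasurableSet A ∧
      P {ω | ζ ω ∈ frontier A} = 0} =>
      limsup (fun n => |p A.1 - q n A.1|) atTop) := by
    refine ⟨1, ?_⟩
    rintro x ⟨A, rfl⟩
    exact aux_limsup_le (fun n => abs_nonneg _)
      (fun n => abs_le.mpr ⟨(hbounds A.1 n).1, (hbounds A.1 n).2⟩)
  -- p A ≤ p (interior A) when frontier is null
  have hint : ∀ (A : Set X), P {ω | ζ ω ∈ frontier A} = 0 → p A ≤ p (interior A) := by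
    intro A hA
    have hsub : {ω | ζ ω ∈ A} ⊆ {ω | ζ ω ∈ interior A} ∪ {ω | ζ ω ∈ frontier A} := by
      intro ω hω
      have : ζ ω ∈ closure A := subset_closure hω
      rw [closure_eq_interior_union_frontier] at this
      exact this.imp (fun h => h) (fun h => h)
    calc p A ≤ (P ({ω | ζ ω ∈ interior A} ∪ {ω | ζ ω ∈ frontier A})).toReal := hmono hsub
      _ ≤ ((P {ω | ζ ω ∈ interior A}) + P {ω | ζ ω ∈ frontier A}).toReal := by
          exact ENNReal.toReal_mono (by finiteness) (measure_union_le _ _)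
      _ = p (interior A) := by rw [hA, add_zero]
  -- complements
  have hcomplζ : ∀ (A : Set X), MeasurableSet A → p Aᶜ = 1 - p A := by
    intro A hA
    have : P {ω | ζ ω ∈ Aᶜ} = 1 - P {ω | ζ ω ∈ A} := by
      have h0 : {ω | ζ ω ∈ Aᶜ} = (ζ ⁻¹' A)ᶜ := rfl
      have h1 : {ω | ζ ω ∈ A} = ζ ⁻¹' A := rfl
      rw [h0, h1, measure_compl (hζ hA) (measure_ne_top _ _), measure_univ]
    simp only [hpdef, this]
    rw [ENNReal.toReal_sub_of_le prob_le_one ENNReal.one_ne_top, ENNReal.toReal_one]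
  have hcomplξ : ∀ (A : Set X) (n : ℕ), MeasurableSet A → q n Aᶜ = 1 - q n A := by
    intro A n hA
    have : P {ω | ξ n ω ∈ Aᶜ} = 1 - P {ω | ξ n ω ∈ A} := by
      have h0 : {ω | ξ n ω ∈ Aᶜ} = (ξ n ⁻¹' A)ᶜ := rfl
      have h1 : {ω | ξ n ω ∈ A} = ξ n ⁻¹' A := rfl
      rw [h0, h1, measure_compl (hξ n hA) (measure_ne_top _ _), measure_univ]
    simp only [hqdef, this]
    rw [ENNReal.toReal_sub_of_le prob_le_one ENNReal.one_ne_top, ENNReal.toReal_one]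
  have : Nonempty {G : Set X // IsOpen G} := ⟨⟨∅, isOpen_empty⟩⟩
  have : Nonempty {A : Set X // MeasurableSet A ∧ P {ω | ζ ω ∈ frontier A} = 0} :=
    ⟨⟨∅, MeasurableSet.empty, by simp [frontier_empty]⟩⟩
  apply le_antisymm
  · -- open sup ≤ continuity-set sup
    apply ciSup_le
    rintro ⟨G, hG⟩
    -- RHS is nonnegative
    have hRnn : 0 ≤ ⨆ A : {A : Set X // MeasurableSet A ∧ P {ω | ζ ω ∈ frontier A} = 0},
        limsup (fun n => |p A.1 - q n A.1|) atTop := by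
      have hmem : MeasurableSet (∅ : Set X) ∧ P {ω | ζ ω ∈ frontier (∅ : Set X)} = 0 := by
        simp [frontier_empty]
      refine le_trans ?_ (le_ciSup hbddR ⟨∅, hmem⟩)
      have : (fun n => |p (∅ : Set X) - q n ∅|) = fun _ => (0:ℝ) := by
        funext n; simp [hpdef, hqdef]
      rw [this, limsup_const]
    rcases eq_or_ne G univ with rfl | hGne
    · have : (fun n => p (univ : Set X) - q n univ) = fun _ => (0:ℝ) := by
        funext n; simp [hpdef, hqdef]
      rw [this, limsup_const]
      exact hRnn
    -- now G ≠ univ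
    have hGcne : (Gᶜ : Set X).Nonempty := nonempty_compl.mpr hGne
    set f : X → ℝ := fun x => Metric.infDist x Gᶜ with hfdef
    have hf : Continuous f := Metric.continuous_infDist_pt _
    have hmemG : ∀ x, x ∈ G ↔ 0 < f x := by
      intro x
      rw [hfdef]
      constructor
      · intro hx
        exact (hG.isClosed_compl.notMem_iff_infDist_pos hGcne).mp (by simpa using hx)
      · intro hx
        by_contra hxG
        have : Metric.infDist x Gᶜ = 0 := Metric.infDist_zero_of_mem (by simpa using hxG)
        simp [this] at hx
      -- done
    -- approximate from inside
    refine le_of_forall_pos_le_add ?_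
    intro η hη
    -- increasing approximation
    have hmonoA : Monotone (fun k : ℕ => {ω | ζ ω ∈ {x | 1/((k:ℝ)+1) < f x}}) := by
      intro k l hkl ω hω
      have h1 : 1/((l:ℝ)+1) ≤ 1/((k:ℝ)+1) := by
        apply one_div_le_one_div_of_le (by positivity)
        exact_mod_cast add_le_add_left (Nat.cast_le.mpr hkl) 1
      exact lt_of_le_of_lt h1 hω
    have hunion : (⋃ k : ℕ, {ω | ζ ω ∈ {x | 1/((k:ℝ)+1) < f x}}) = {ω | ζ ω ∈ G} := by
      ext ω
      simp only [mem_iUnion, mem_setOf_eq]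
      constructor
      · rintro ⟨k, hk⟩
        exact (hmemG _).mpr (lt_trans (by positivity) hk)
      · intro hω
        obtain ⟨k, hk⟩ := exists_nat_one_div_lt ((hmemG _).mp hω)
        exact ⟨k, hk⟩
    have htendsto : Tendsto (fun k : ℕ => (P {ω | ζ ω ∈ {x | 1/((k:ℝ)+1) < f x}}).toReal)
        atTop (𝓝 (p G)) := by
      have h1 := tendsto_measure_iUnion_atTop (μ := P) hmonoA
      rw [hunion] at h1
      exact (ENNReal.tendsto_toReal (measure_ne_top _ _)).comp h1
    obtain ⟨k₀, hk₀⟩ := (htendsto.eventually (eventually_gt_nhds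
      (show p G - η < p G by linarith))).exists
    -- pick a good level t
    have hSct : Set.Countable {t : ℝ | 0 < (P.map ζ) {x | f x = t}} := by
      have : IsProbabilityMeasure (P.map ζ) := Measure.isProbabilityMeasure_map hζ.aemeasurable
      exact Measure.countable_meas_level_set_pos hf.measurable
    have hIoo : ¬ (Set.Ioo (0:ℝ) (1/((k₀:ℝ)+1)) ⊆ {t : ℝ | 0 < (P.map ζ) {x | f x = t}}) := by
      intro hsub
      have hc : (Set.Ioo (0:ℝ) (1/((k₀:ℝ)+1))).Countable := hSct.mono hsub
      have hcard := Cardinal.mk_Ioo_real (show (0:ℝ) < 1/((k₀:ℝ)+1) by positivity)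
      rw [← Cardinal.le_aleph0_iff_set_countable] at hc
      rw [hcard] at hc
      exact absurd hc (not_le.mpr Cardinal.aleph0_lt_continuum)
    obtain ⟨t, htIoo, htS⟩ := not_subset.mp hIoo
    simp only [mem_setOf_eq, not_lt, le_zero_iff] at htS
    -- the approximating set
    set A : Set X := {x | t < f x} with hAdef
    have hAopen : IsOpen A := isOpen_lt continuous_const hf
    have hAG : A ⊆ G := fun x hx => (hmemG x).mpr (lt_trans htIoo.1 hx)
    have hfrA : P {ω | ζ ω ∈ frontier A} = 0 := by
      have hsub : frontier A ⊆ {x | f x = t} := by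
        intro x hx
        have := frontier_lt_subset_eq continuous_const hf hx
        exact this.symm
      have : {ω | ζ ω ∈ frontier A} ⊆ ζ ⁻¹' {x | f x = t} := fun ω h => hsub h
      refine measure_mono_null this ?_
      have hms : MeasurableSet {x : X | f x = t} := by
        have : {x : X | f x = t} = f ⁻¹' {t} := rfl
        rw [this]
        exact hf.measurable (measurableSet_singleton t)
      rw [← Measure.map_apply hζ hms]
      exact htS
    have hAmem : MeasurableSet A ∧ P {ω | ζ ω ∈ frontier A} = 0 :=
      ⟨hAopen.measurableSet, hfrA⟩
    -- p G < p A + η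
    have hpA : p G < p A + η := by
      have h1 : {ω | ζ ω ∈ {x | 1/((k₀:ℝ)+1) < f x}} ⊆ {ω | ζ ω ∈ A} := by
        intro ω hω
        exact lt_trans htIoo.2 hω
      have h2 := hmono h1
      simp only [hpdef]
      calc (P {ω | ζ ω ∈ G}).toReal
          < (P {ω | ζ ω ∈ {x | 1/((k₀:ℝ)+1) < f x}}).toReal + η := by
            have := hk₀; simp only [hpdef] at this; linarith
        _ ≤ (P {ω | ζ ω ∈ A}).toReal + η := by linarith
    -- pointwise bound
    have hpt : ∀ n, p G - q n G ≤ |p A - q n A| + η := by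
      intro n
      have h1 : q n A ≤ q n G := hmono (fun ω hω => hAG hω)
      have h2 : p A - q n A ≤ |p A - q n A| := le_abs_self _
      linarith
    -- conclude via limsup
    have hL1 : limsup (fun n => p G - q n G) atTop ≤
        limsup (fun n => |p A - q n A| + η) atTop := by
      refine limsup_le_limsup (Eventually.of_forall hpt) ?_ ?_
      · exact aux_cobdd_le (fun n => (hbounds G n).1)
      · exact aux_bdd_le (fun n => add_le_add_left
          (abs_le.mpr ⟨(hbounds A n).1, (hbounds A n).2⟩) η)
    have hL2 : limsup (fun n => |p A - q n A| + η) atTop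
        = limsup (fun n => |p A - q n A|) atTop + η := by
      apply limsup_add_const atTop (fun n => |p A - q n A|) η
      · exact aux_bdd_le (fun n => abs_le.mpr ⟨(hbounds A n).1, (hbounds A n).2⟩)
      · exact aux_cobdd_le (fun n => abs_nonneg _)
    have hL3 : limsup (fun n => |p A - q n A|) atTop
        ≤ ⨆ B : {B : Set X // MeasurableSet B ∧ P {ω | ζ ω ∈ frontier B} = 0},
          limsup (fun n => |p B.1 - q n B.1|) atTop := le_ciSup hbddR ⟨A, hAmem⟩
    calc limsup (fun n => p G - q n G) atTop
        ≤ limsup (fun n => |p A - q n A|) atTop + η := by rw [← hL2]; exact hL1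
      _ ≤ _ + η := by linarith
  · -- continuity-set sup ≤ open sup
    apply ciSup_le
    rintro ⟨A, hAm, hA0⟩
    have hA0c : P {ω | ζ ω ∈ frontier Aᶜ} = 0 := by rwa [frontier_compl]
    -- pointwise: |p A - q n A| ≤ max (g1 n) (g2 n)
    have hpt : ∀ n, |p A - q n A| ≤
        max (p (interior A) - q n (interior A)) (p (interior Aᶜ) - q n (interior Aᶜ)) := by
      intro n
      have h1 : p A - q n A ≤ p (interior A) - q n (interior A) := by
        have ha := hint A hA0
        have hb : q n (interior A) ≤ q n A := hmono (show {ω | ξ n ω ∈ interior A} ⊆ {ω | ξ n ω ∈ A} from fun ω hω => interior_subset (s := A) hω)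
        linarith
      have h2 : q n A - p A ≤ p (interior Aᶜ) - q n (interior Aᶜ) := by
        have ha := hint Aᶜ hA0c
        have hb : q n (interior Aᶜ) ≤ q n Aᶜ := hmono (show {ω | ξ n ω ∈ interior Aᶜ} ⊆ {ω | ξ n ω ∈ Aᶜ} from fun ω hω => interior_subset (s := Aᶜ) hω)
        have hc := hcomplζ A hAm
        have hd := hcomplξ A n hAm
        linarith
      rcases abs_cases (p A - q n A) with ⟨heq, _⟩ | ⟨heq, _⟩
      · rw [heq]; exact le_max_of_le_left h1
      · rw [heq]; refine le_max_of_le_right ?_; linarith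
    have hb1 : ∀ n, -1 ≤ p (interior A) - q n (interior A) := fun n => (hbounds _ n).1
    have hb1' : ∀ n, p (interior A) - q n (interior A) ≤ 1 := fun n => (hbounds _ n).2
    have hb2 : ∀ n, -1 ≤ p (interior Aᶜ) - q n (interior Aᶜ) := fun n => (hbounds _ n).1
    have hb2' : ∀ n, p (interior Aᶜ) - q n (interior Aᶜ) ≤ 1 := fun n => (hbounds _ n).2
    have hL1 : limsup (fun n => |p A - q n A|) atTop ≤
        limsup (fun n => max (p (interior A) - q n (interior A))
          (p (interior Aᶜ) - q n (interior Aᶜ))) atTop := by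
      refine limsup_le_limsup (Eventually.of_forall hpt) ?_ ?_
      · exact aux_cobdd_le (fun n => abs_nonneg _)
      · exact aux_bdd_le (fun n => max_le (hb1' n) (hb2' n))
    have hL2 : limsup (fun n => max (p (interior A) - q n (interior A))
          (p (interior Aᶜ) - q n (interior Aᶜ))) atTop
        = max (limsup (fun n => p (interior A) - q n (interior A)) atTop)
            (limsup (fun n => p (interior Aᶜ) - q n (interior Aᶜ)) atTop) := by
      refine limsup_max ?_ ?_ ?_ ?_
      · exact aux_cobdd_le hb1
      · exact aux_cobdd_le hb2
      · exact aux_bdd_le hb1'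
      · exact aux_bdd_le hb2'
    have hle1 : limsup (fun n => p (interior A) - q n (interior A)) atTop ≤
        ⨆ G : {G : Set X // IsOpen G}, limsup (fun n => p G.1 - q n G.1) atTop :=
      le_ciSup hbddL ⟨interior A, isOpen_interior⟩
    have hle2 : limsup (fun n => p (interior Aᶜ) - q n (interior Aᶜ)) atTop ≤
        ⨆ G : {G : Set X // IsOpen G}, limsup (fun n => p G.1 - q n G.1) atTop :=
      le_ciSup hbddL ⟨interior Aᶜ, isOpen_interior⟩
    calc limsup (fun n => |p A - q n A|) atTop
        ≤ max (limsup (fun n => p (interior A) - q n (interior A)) atTop)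
            (limsup (fun n => p (interior Aᶜ) - q n (interior Aᶜ)) atTop) := by
          rw [← hL2]; exact hL1
      _ ≤ _ := max_le hle1 hle2

end
end

section
/- Let X be a separable metric space, ξ and (ξ_n) X-valued random variables, and (N_n) ℕ-valued random variables, all on a common probability space. Define λ_w(ξ_n → ξ) = sup_{F closed} limsup_n (P[ξ_n ∈ F] − P[ξ ∈ F]), λ_P(η_n → η) = sup_{ε>0} limsup_n P[d(η, η_n) ≥ ε], and χ_Ansc⟨(ξ_n)⟩ = sup_{ε>0} inf_{δ>0} limsup_n P[max_{⌈(1-δ)n⌉ ≤ m ≤ ⌊(1+δ)n⌋} d(ξ_n, ξ_m) ≥ ε]. Then λ_w(ξ_{N_n} → ξ) ≤ λ_w(ξ_n → ξ) + χ_Ansc⟨(ξ_n)⟩ + inf_{(k_n)} λ_P(N_n/k_n → 1), where the infimum ranges over all sequences (k_n) of positive reals with k_n → ∞. -/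
open MeasureTheory Filter Topology

section helpers
private lemma bddU {u : ℕ → ℝ} {f : Filter ℕ} {C : ℝ} (h : ∀ n, u n ≤ C) :
    f.IsBoundedUnder (· ≤ ·) u := isBoundedUnder_of ⟨C, h⟩

private lemma cobddU {u : ℕ → ℝ} {f : Filter ℕ} [f.NeBot] {c : ℝ} (h : ∀ n, c ≤ u n) :
    f.IsCoboundedUnder (· ≤ ·) u :=
  (isBoundedUnder_of (r := (· ≥ ·)) ⟨c, h⟩ : f.IsBoundedUnder (· ≥ ·) u).isCoboundedUnder_le

private lemma limsup_le_const {u : ℕ → ℝ} {c C : ℝ} (hc : ∀ n, c ≤ u n) (hC : ∀ n, u n ≤ C) :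
    limsup u atTop ≤ C :=
  limsup_le_of_le (cobddU hc) (Eventually.of_forall hC)

private lemma const_le_limsup {u : ℕ → ℝ} {c C : ℝ} (hc : ∀ n, c ≤ u n) (hC : ∀ n, u n ≤ C) :
    c ≤ limsup u atTop :=
  le_limsup_of_frequently_le (Frequently.of_forall hc) (bddU hC)

private lemma limsup_comp_le_limsup {u : ℕ → ℝ} {c C : ℝ} (hc : ∀ n, c ≤ u n) (hC : ∀ n, u n ≤ C)
    {m : ℕ → ℕ} (hm : Tendsto m atTop atTop) :
    limsup (fun n => u (m n)) atTop ≤ limsup u atTop := by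
  have h1 : limsup (fun n => u (m n)) atTop = limsup u (map m atTop) :=
    limsup_comp u m atTop
  rw [h1]
  refine limsup_le_limsup_of_le hm ?_ (isBoundedUnder_of ⟨C, hC⟩)
  exact (isBoundedUnder_of (r := (· ≥ ·)) ⟨c, fun x => hc x⟩ :
    (map m atTop).IsBoundedUnder (· ≥ ·) u).isCoboundedUnder_le

private lemma limsup_add3_le {g1 g2 g3 : ℕ → ℝ} {c C : ℝ}
    (h1c : ∀ n, c ≤ g1 n) (h1C : ∀ n, g1 n ≤ C)
    (h2c : ∀ n, c ≤ g2 n) (h2C : ∀ n, g2 n ≤ C)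
    (h3c : ∀ n, c ≤ g3 n) (h3C : ∀ n, g3 n ≤ C) :
    limsup (g1 + g2 + g3) atTop ≤ limsup g1 atTop + limsup g2 atTop + limsup g3 atTop := by
  have h12 : limsup (g1 + g2) atTop ≤ limsup g1 atTop + limsup g2 atTop :=
    limsup_add_le (isBoundedUnder_of ⟨c, h1c⟩) (bddU h1C) (cobddU h2c) (bddU h2C)
  have h123 : limsup (g1 + g2 + g3) atTop ≤ limsup (g1 + g2) atTop + limsup g3 atTop :=
    limsup_add_le (isBoundedUnder_of ⟨c + c, fun n => add_le_add (h1c n) (h2c n)⟩)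
      (bddU (fun n => add_le_add (h1C n) (h2C n))) (cobddU h3c) (bddU h3C)
  linarith

private lemma bddAbove_of_le {α : Sort*} {f : α → ℝ} {C : ℝ} (h : ∀ i, f i ≤ C) :
    BddAbove (Set.range f) := ⟨C, by rintro x ⟨i, rfl⟩; exact h i⟩

private lemma bddBelow_of_le {α : Sort*} {f : α → ℝ} {c : ℝ} (h : ∀ i, c ≤ f i) :
    BddBelow (Set.range f) := ⟨c, by rintro x ⟨i, rfl⟩; exact h i⟩

private lemma ptoReal_le_one {Ω : Type*} [MeasurableSpace Ω] (P : Measure Ω)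
    [IsProbabilityMeasure P] (s : Set Ω) : (P s).toReal ≤ 1 := by
  simpa using ENNReal.toReal_mono ENNReal.one_ne_top (prob_le_one (μ := P) (s := s))

private lemma window_mem {K : ℝ} {a M : ℕ} {δ' : ℝ} (hδ' : 0 < δ') (hK : 0 < K)
    (hKbig : 2 / δ' ≤ K) (hM : (M:ℝ) = ⌈K⌉₊) (ha : |1 - (a:ℝ)/K| < δ'/2) :
    ⌈(1 - δ') * (M:ℝ)⌉ ≤ (a:ℤ) ∧ (a:ℤ) ≤ ⌊(1 + δ') * (M:ℝ)⌋ := by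
  have hKM : K ≤ (M:ℝ) := hM ▸ Nat.le_ceil K
  have hMK : (M:ℝ) < K + 1 := by rw [hM]; exact Nat.ceil_lt_add_one hK.le
  have habs : |K - (a:ℝ)| < (δ'/2) * K := by
    have h0 : |1 - (a:ℝ)/K| * |K| = |K - (a:ℝ)| := by
      rw [← abs_mul]; congr 1; field_simp
    rw [abs_of_pos hK] at h0
    rw [← h0]
    exact (mul_lt_mul_of_pos_right ha hK)
  have h1 : (1 - δ'/2) * K < (a:ℝ) := by
    have := abs_lt.mp habs
    nlinarith [this.1, this.2]
  have h2 : (a:ℝ) < (1 + δ'/2) * K := by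
    have := abs_lt.mp habs
    nlinarith [this.1, this.2]
  have hKb : 1 ≤ (δ'/2) * K := by
    have := mul_le_mul_of_nonneg_left hKbig (le_of_lt (half_pos hδ'))
    calc (1:ℝ) = (δ'/2) * (2/δ') := by field_simp
    _ ≤ (δ'/2) * K := this
  constructor
  · rw [Int.ceil_le]
    push_cast
    rcases le_or_gt (1 - δ') 0 with hneg | hpos
    · have : (1 - δ') * (M:ℝ) ≤ 0 := mul_nonpos_of_nonpos_of_nonneg hneg (by positivity)
      exact this.trans (Nat.cast_nonneg a)
    · have step1 : (1 - δ') * (M:ℝ) ≤ (1 - δ') * (K + 1) :=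
        mul_le_mul_of_nonneg_left hMK.le hpos.le
      have step2 : (1 - δ') * (K + 1) ≤ (1 - δ'/2) * K := by nlinarith
      linarith
  · rw [Int.le_floor]
    push_cast
    have : (1 + δ'/2) * K ≤ (1 + δ') * (M:ℝ) := by nlinarith
    linarith

private lemma thick_exists {Ω X : Type*} [MeasurableSpace Ω] [MetricSpace X] [MeasurableSpace X]
    [BorelSpace X] (P : Measure Ω) [IsProbabilityMeasure P] {ζ : Ω → X} (hζ : Measurable ζ)
    {F : Set X} (hF : IsClosed F) {η : ℝ} (hη : 0 < η) :
    ∃ ε : ℝ, 0 < ε ∧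
      (P {ω | ζ ω ∈ Metric.cthickening ε F}).toReal ≤ (P {ω | ζ ω ∈ F}).toReal + η := by
  set S : ℕ → Set Ω := fun j => {ω | ζ ω ∈ Metric.cthickening ((j:ℝ)+1)⁻¹ F} with hS
  have hmeas : ∀ j, NullMeasurableSet (S j) P := fun j =>
    (hζ (Metric.isClosed_cthickening.measurableSet)).nullMeasurableSet
  have hanti : Antitone S := by
    intro i j hij ω hω
    exact Metric.cthickening_mono (by
      apply inv_anti₀ (by positivity)
      exact_mod_cast add_le_add_left (Nat.cast_le.mpr hij) 1) F hω
  have hinter : ⋂ j, S j = {ω | ζ ω ∈ F} := by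
    ext ω
    simp only [Set.mem_iInter, hS, Set.mem_setOf_eq]
    constructor
    · intro h
      have h0 : EMetric.infEdist (ζ ω) F = 0 := by
        refine le_antisymm ?_ zero_le
        have htd : Tendsto (fun j : ℕ => ENNReal.ofReal ((j:ℝ)+1)⁻¹) atTop (𝓝 0) := by
          have h' : Tendsto (fun j : ℕ => ((j:ℝ)+1)⁻¹) atTop (𝓝 0) := by
            simpa [one_div] using tendsto_one_div_add_atTop_nhds_zero_nat (𝕜 := ℝ)
          simpa using (ENNReal.tendsto_ofReal h')
        exact ge_of_tendsto' htd (fun j => Metric.mem_cthickening_iff.mp (h j))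
      have := EMetric.mem_closure_iff_infEdist_zero.mpr h0
      rwa [hF.closure_eq] at this
    · intro h j
      exact Metric.closure_subset_cthickening _ F (subset_closure h)
  have htend : Tendsto (fun j => (P (S j)).toReal) atTop (𝓝 ((P {ω | ζ ω ∈ F}).toReal)) := by
    have h1 : Tendsto (fun j => P (S j)) atTop (𝓝 (P (⋂ j, S j))) :=
      tendsto_measure_iInter_atTop hmeas hanti ⟨0, measure_ne_top P _⟩
    rw [hinter] at h1
    exact (ENNReal.tendsto_toReal (measure_ne_top P _)).comp h1
  have := htend.eventually (gt_mem_nhds (lt_add_of_pos_right _ hη))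
  obtain ⟨j, hj⟩ := this.exists
  exact ⟨((j:ℝ)+1)⁻¹, by positivity, hj.le⟩
end helpers

theorem approach_anscombe {Ω X : Type*} [MeasurableSpace Ω] [MetricSpace X]
    [TopologicalSpace.SeparableSpace X] [MeasurableSpace X] [BorelSpace X]
    (P : Measure Ω) [IsProbabilityMeasure P]
    (ξ : ℕ → Ω → X) (ζ : Ω → X) (N : ℕ → Ω → ℕ)
    (hξ : ∀ n, Measurable (ξ n)) (hζ : Measurable ζ) (hN : ∀ n, Measurable (N n)) :
    lamW P (fun n ω => ξ (N n ω) ω) ζ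
      ≤ lamW P ξ ζ + anscIndex P ξ
        + ⨅ k : {k : ℕ → ℝ // (∀ n, 0 < k n) ∧ Tendsto k atTop atTop},
            lamP P (fun n ω => (N n ω : ℝ) / k.1 n) (fun _ => (1 : ℝ)) := by
  haveI hne : Nonempty {k : ℕ → ℝ // (∀ n, 0 < k n) ∧ Tendsto k atTop atTop} :=
    ⟨⟨fun n => (n:ℝ)+1, fun n => by positivity,
      tendsto_atTop_add_const_right _ 1 tendsto_natCast_atTop_atTop⟩⟩
  rw [← sub_le_iff_le_add']
  refine le_ciInf fun kk => ?_
  rw [sub_le_iff_le_add']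
  obtain ⟨k, hkpos, hktop⟩ := kk
  -- the target probability-convergence index for this k
  set C : ℝ := lamP P (fun n ω => (N n ω : ℝ) / k n) (fun _ => (1 : ℝ)) with hCdef
  haveI : Nonempty {F : Set X // IsClosed F} := ⟨⟨∅, isClosed_empty⟩⟩
  rw [lamW]
  refine ciSup_le fun FF => ?_
  obtain ⟨F, hF⟩ := FF
  refine le_of_forall_pos_le_add fun η hη => ?_
  have hη3 : 0 < η / 3 := by linarith
  -- thickening
  obtain ⟨ε₀, hε₀, hthick⟩ := thick_exists P hζ hF hη3
  set Fε : Set X := Metric.cthickening ε₀ F with hFε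
  -- anscombe index bound
  have hinfB : (⨅ δ : {x:ℝ//0<x}, limsup (fun n => oscProb P ξ δ.1 ε₀ n) atTop)
      ≤ anscIndex P ξ := by
    refine le_ciSup (f := fun ε : {x:ℝ//0<x} =>
      ⨅ δ : {x:ℝ//0<x}, limsup (fun n => oscProb P ξ δ.1 ε.1 n) atTop) ?_ ⟨ε₀, hε₀⟩
    refine bddAbove_of_le (C := 1) fun ε => ?_
    refine ciInf_le_of_le ?_ ⟨1, one_pos⟩
      (limsup_le_const (fun n => ENNReal.toReal_nonneg) (fun n => ptoReal_le_one P _))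
    exact bddBelow_of_le fun δ =>
      const_le_limsup (fun n => ENNReal.toReal_nonneg) (fun n => ptoReal_le_one P _)
  obtain ⟨δ', hδ'⟩ := exists_lt_of_ciInf_lt
    (lt_add_of_pos_right (⨅ δ : {x:ℝ//0<x}, limsup (fun n => oscProb P ξ δ.1 ε₀ n) atTop) hη3)
  have hosc : limsup (fun n => oscProb P ξ δ'.1 ε₀ n) atTop ≤ anscIndex P ξ + η/3 := by
    have := hδ'.le
    linarith
  -- lamP bound
  set δ : ℝ := δ'.1/2 with hδdef
  have hδpos : 0 < δ := by have := δ'.2; positivity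
  have hCle : limsup (fun n => (P {ω | δ ≤ dist (1:ℝ) ((N n ω : ℝ)/ k n)}).toReal) atTop ≤ C := by
    rw [hCdef, lamP]
    exact le_ciSup (f := fun ε : {x:ℝ//0<x} =>
        limsup (fun n => (P {ω | ε.1 ≤ dist ((fun _ : Ω => (1:ℝ)) ω)
          ((fun n ω => (N n ω : ℝ) / k n) n ω)}).toReal) atTop)
      (bddAbove_of_le fun ε =>
        limsup_le_const (fun n => ENNReal.toReal_nonneg) (fun n => ptoReal_le_one P _))
      ⟨δ, hδpos⟩
  -- the deterministic index sequence
  set m : ℕ → ℕ := fun n => ⌈k n⌉₊ with hm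
  have hmtop : Tendsto m atTop atTop := by
    refine tendsto_natCast_atTop_iff (R := ℝ) |>.mp ?_
    exact tendsto_atTop_mono (fun n => Nat.le_ceil (k n)) hktop
  set PF : ℝ := (P {ω | ζ ω ∈ F}).toReal with hPF
  set PFε : ℝ := (P {ω | ζ ω ∈ Fε}).toReal with hPFε
  set g1 : ℕ → ℝ := fun n => (P {ω | ξ (m n) ω ∈ Fε}).toReal - PFε with hg1
  set g2 : ℕ → ℝ := fun n => oscProb P ξ δ'.1 ε₀ (m n) with hg2
  set g3 : ℕ → ℝ := fun n => (P {ω | δ ≤ dist (1:ℝ) ((N n ω : ℝ)/ k n)}).toReal with hg3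
  -- pointwise eventual inequality
  have hev : ∀ᶠ n in atTop, (P {ω | ξ (N n ω) ω ∈ F}).toReal - PF
      ≤ (g1 + g2 + g3 + (fun _ : ℕ => PFε - PF)) n := by
    filter_upwards [hktop.eventually_ge_atTop (2/δ'.1)] with n hn
    have hsub : {ω | ξ (N n ω) ω ∈ F} ⊆
        ({ω | ξ (m n) ω ∈ Fε} ∪ {ω | ∃ mm : ℕ, ⌈(1 - δ'.1) * ((m n : ℕ) : ℝ)⌉ ≤ (mm : ℤ) ∧
            (mm : ℤ) ≤ ⌊(1 + δ'.1) * ((m n : ℕ) : ℝ)⌋ ∧ ε₀ ≤ dist (ξ (m n) ω) (ξ mm ω)})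
          ∪ {ω | δ ≤ dist (1:ℝ) ((N n ω : ℝ)/ k n)} := by
      intro ω hω
      by_cases hD : δ ≤ dist (1:ℝ) ((N n ω : ℝ)/ k n)
      · exact Or.inr hD
      by_cases hO : ∃ mm : ℕ, ⌈(1 - δ'.1) * ((m n : ℕ) : ℝ)⌉ ≤ (mm : ℤ) ∧
          (mm : ℤ) ≤ ⌊(1 + δ'.1) * ((m n : ℕ) : ℝ)⌋ ∧ ε₀ ≤ dist (ξ (m n) ω) (ξ mm ω)
      · exact Or.inl (Or.inr hO)
      · refine Or.inl (Or.inl ?_)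
        push_neg at hO hD
        have hdist : |1 - ((N n ω : ℕ) : ℝ)/ k n| < δ'.1/2 := by
          have : dist (1:ℝ) ((N n ω : ℝ)/ k n) = |1 - ((N n ω : ℕ) : ℝ)/ k n| := by
            rw [Real.dist_eq]
          rw [this] at hD
          exact hD
        have hw := window_mem (a := N n ω) (M := m n) δ'.2 (hkpos n) hn (by simp [hm]) hdist
        have := hO (N n ω) hw.1 hw.2
        exact Metric.mem_cthickening_of_dist_le (ξ (m n) ω) (ξ (N n ω) ω) ε₀ F hω this.le
    have hmeasle : P {ω | ξ (N n ω) ω ∈ F}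
        ≤ P {ω | ξ (m n) ω ∈ Fε} + P {ω | ∃ mm : ℕ,
            ⌈(1 - δ'.1) * ((m n : ℕ) : ℝ)⌉ ≤ (mm : ℤ) ∧
            (mm : ℤ) ≤ ⌊(1 + δ'.1) * ((m n : ℕ) : ℝ)⌋ ∧ ε₀ ≤ dist (ξ (m n) ω) (ξ mm ω)}
          + P {ω | δ ≤ dist (1:ℝ) ((N n ω : ℝ)/ k n)} :=
      (measure_mono hsub).trans ((measure_union_le _ _).trans
        (add_le_add_left (measure_union_le _ _) _))
    have htr := ENNReal.toReal_mono
      (by finiteness) hmeasle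
    rw [ENNReal.toReal_add (by finiteness) (by finiteness),
      ENNReal.toReal_add (by finiteness) (by finiteness)] at htr
    simp only [Pi.add_apply, hg1, hg2, hg3, oscProb]
    linarith
  -- limsup chain
  have hb1c : ∀ n, (-1:ℝ) ≤ g1 n := fun n => by
    have := ptoReal_le_one P {ω | ζ ω ∈ Fε}
    have h2 : (0:ℝ) ≤ (P {ω | ξ (m n) ω ∈ Fε}).toReal := ENNReal.toReal_nonneg
    simp only [hg1]; rw [hPFε]; linarith
  have hb1C : ∀ n, g1 n ≤ 1 := fun n => by
    have := ptoReal_le_one P {ω | ξ (m n) ω ∈ Fε}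
    have h2 : (0:ℝ) ≤ PFε := by rw [hPFε]; exact ENNReal.toReal_nonneg
    simp only [hg1]; linarith
  have hb2c : ∀ n, (-1:ℝ) ≤ g2 n := fun n => by
    have : (0:ℝ) ≤ g2 n := ENNReal.toReal_nonneg
    linarith
  have hb2C : ∀ n, g2 n ≤ 1 := fun n => ptoReal_le_one P _
  have hb3c : ∀ n, (-1:ℝ) ≤ g3 n := fun n => by
    have : (0:ℝ) ≤ g3 n := ENNReal.toReal_nonneg
    linarith
  have hb3C : ∀ n, g3 n ≤ 1 := fun n => ptoReal_le_one P _
  have hLHSb : ∀ n, (-1:ℝ) ≤ (P {ω | ξ (N n ω) ω ∈ F}).toReal - PF := fun n => by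
    have := ptoReal_le_one P {ω | ζ ω ∈ F}
    have h2 : (0:ℝ) ≤ (P {ω | ξ (N n ω) ω ∈ F}).toReal := ENNReal.toReal_nonneg
    rw [hPF]; linarith
  have hRHSb : ∀ n, (g1 + g2 + g3 + (fun _ : ℕ => PFε - PF)) n ≤ 4 := fun n => by
    have h1 := hb1C n; have h2 := hb2C n; have h3 := hb3C n
    have h4 : PFε - PF ≤ 1 := by
      have := ptoReal_le_one P {ω | ζ ω ∈ Fε}
      have h5 : (0:ℝ) ≤ PF := by rw [hPF]; exact ENNReal.toReal_nonneg
      rw [hPFε]; linarith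
    simp only [Pi.add_apply]; linarith
  have step1 : limsup (fun n => (P {ω | ξ (N n ω) ω ∈ F}).toReal - PF) atTop
      ≤ limsup (g1 + g2 + g3 + (fun _ : ℕ => PFε - PF)) atTop :=
    limsup_le_limsup hev (cobddU hLHSb) (bddU hRHSb)
  have step2 : limsup (g1 + g2 + g3 + (fun _ : ℕ => PFε - PF)) atTop
      ≤ limsup (g1 + g2 + g3) atTop + (PFε - PF) := by
    have h := limsup_add_le (f := atTop) (u := g1 + g2 + g3) (v := fun _ => PFε - PF)
      (isBoundedUnder_of ⟨-3, fun n => by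
        have h1 := hb1c n; have h2 := hb2c n; have h3 := hb3c n
        simp only [Pi.add_apply]; linarith⟩)
      (bddU (C := 3) (fun n => by
        have h1 := hb1C n; have h2 := hb2C n; have h3 := hb3C n
        simp only [Pi.add_apply]; linarith))
      (cobddU (c := PFε - PF) (fun n => le_refl _))
      (bddU (C := PFε - PF) (fun n => le_refl _))
    rwa [limsup_const (PFε - PF)] at h
  have step3 : limsup (g1 + g2 + g3) atTop
      ≤ limsup g1 atTop + limsup g2 atTop + limsup g3 atTop :=
    limsup_add3_le hb1c hb1C hb2c hb2C hb3c hb3C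
  -- individual limsups
  have hg1le : limsup g1 atTop ≤ lamW P ξ ζ := by
    have hcomp : limsup g1 atTop
        ≤ limsup (fun j => (P {ω | ξ j ω ∈ Fε}).toReal - PFε) atTop := by
      refine limsup_comp_le_limsup (u := fun j => (P {ω | ξ j ω ∈ Fε}).toReal - PFε)
        (c := -1) (C := 1) ?_ ?_ hmtop
      · intro j
        have := ptoReal_le_one P {ω | ζ ω ∈ Fε}
        have h2 : (0:ℝ) ≤ (P {ω | ξ j ω ∈ Fε}).toReal := ENNReal.toReal_nonneg
        rw [hPFε]; linarith
      · intro j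
        have := ptoReal_le_one P {ω | ξ j ω ∈ Fε}
        have h2 : (0:ℝ) ≤ PFε := by rw [hPFε]; exact ENNReal.toReal_nonneg
        linarith
    refine hcomp.trans ?_
    rw [lamW]
    exact le_ciSup (f := fun FG : {F : Set X // IsClosed F} =>
        limsup (fun j => (P {ω | ξ j ω ∈ FG.1}).toReal - (P {ω | ζ ω ∈ FG.1}).toReal) atTop)
      (bddAbove_of_le fun FG =>
        limsup_le_const (c := -1) (C := 1) (fun j => by
            have := ptoReal_le_one P {ω | ζ ω ∈ FG.1}
            have h2 : (0:ℝ) ≤ (P {ω | ξ j ω ∈ FG.1}).toReal := ENNReal.toReal_nonneg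
            linarith)
          (fun j => by
            have := ptoReal_le_one P {ω | ξ j ω ∈ FG.1}
            have h2 : (0:ℝ) ≤ (P {ω | ζ ω ∈ FG.1}).toReal := ENNReal.toReal_nonneg
            linarith))
      ⟨Fε, Metric.isClosed_cthickening⟩
  have hg2le : limsup g2 atTop ≤ anscIndex P ξ + η/3 := by
    refine (limsup_comp_le_limsup (u := fun j => oscProb P ξ δ'.1 ε₀ j) (c := 0) (C := 1)
      (fun j => ENNReal.toReal_nonneg) (fun j => ptoReal_le_one P _) hmtop).trans hosc
  -- put everything together
  have hfinal := step1.trans (step2.trans (by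
    have := add_le_add (add_le_add (add_le_add hg1le hg2le) hCle) (le_refl (PFε - PF))
    exact (add_le_add_left step3 (PFε - PF)).trans this))
  have hthick' : PFε - PF ≤ η/3 := by
    rw [hPFε, hPF]; linarith
  calc limsup (fun n => (P {ω | ξ (N n ω) ω ∈ F}).toReal - PF) atTop
      ≤ lamW P ξ ζ + (anscIndex P ξ + η/3) + C + (PFε - PF) := hfinal
    _ ≤ lamW P ξ ζ + anscIndex P ξ + C + η := by linarith
end

section
/- Let X be a separable metric space, ξ and (ξ_n) X-valued random variables, and (N_n) ℕ-valued random variables. Suppose there is a sequence (k_n) of positive integers with k_n → ∞ such that N_n/k_n → 1 in probability, and suppose (ξ_n) satisfies Anscombe's condition. Then for every closed set F ⊆ X and every ε > 0, limsup_n P[ξ_{N_n} ∈ F] ≤ limsup_n P[ξ_n ∈ F^(ε)] + 2ε, where F^(ε) is the open ε-enlargement of F. -/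
open MeasureTheory Filter Topology

theorem anscombe_limsup_bound {Ω X : Type*} [MeasurableSpace Ω] [MetricSpace X]
    [TopologicalSpace.SeparableSpace X] [MeasurableSpace X] [BorelSpace X]
    (P : Measure Ω) [IsProbabilityMeasure P]
    (ξ : ℕ → Ω → X) (ζ : Ω → X) (N : ℕ → Ω → ℕ)
    (hξ : ∀ n, Measurable (ξ n)) (hζ : Measurable ζ) (hN : ∀ n, Measurable (N n))
    (k : ℕ → ℕ) (hkpos : ∀ n, 0 < k n) (hktop : Tendsto k atTop atTop)
    (hprob : ∀ ε > (0 : ℝ),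
      Tendsto (fun n => (P {ω | ε ≤ |(N n ω : ℝ) / (k n : ℝ) - 1|}).toReal) atTop (𝓝 0))
    (hAnsc : AnscombeCond P ξ) :
    ∀ F : Set X, IsClosed F → ∀ ε > (0 : ℝ),
      limsup (fun n => (P {ω | ξ (N n ω) ω ∈ F}).toReal) atTop
        ≤ limsup (fun n => (P {ω | ξ n ω ∈ Metric.thickening ε F}).toReal) atTop
          + 2 * ε := by
  intro F hF ε hε
  obtain ⟨δ, hδ, n₀, hosc⟩ := hAnsc ε hε
  set a : ℕ → ℝ := fun n => (P {ω | ξ n ω ∈ Metric.thickening ε F}).toReal with ha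
  set L := limsup a atTop with hL
  refine le_of_forall_pos_le_add fun η hη => ?_
  have hbd1 : ∀ m, a m ≤ 1 := fun m => by
    have : P {ω | ξ m ω ∈ Metric.thickening ε F} ≤ 1 := prob_le_one
    simpa using ENNReal.toReal_mono (by simp) this
  have hev1 : ∀ᶠ m in atTop, a m < L + η :=
    eventually_lt_of_limsup_lt (by linarith [lt_add_of_pos_right L hη])
      (isBoundedUnder_of ⟨1, hbd1⟩)
  have hev1' : ∀ᶠ n in atTop, a (k n) < L + η := hktop.eventually hev1
  have hev2 : ∀ᶠ n in atTop, oscProb P ξ δ ε (k n) < ε :=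
    (hktop.eventually_ge_atTop n₀).mono fun n hn => hosc _ hn
  have hev3 : ∀ᶠ n in atTop,
      (P {ω | δ ≤ |(N n ω : ℝ) / (k n : ℝ) - 1|}).toReal < ε :=
    (hprob δ hδ).eventually_lt_const hε
  have hevmain : ∀ᶠ n in atTop,
      (P {ω | ξ (N n ω) ω ∈ F}).toReal ≤ (L + η) + ε + ε := by
    filter_upwards [hev1', hev2, hev3] with n h1 h2 h3
    set B₁ := {ω | ξ (k n) ω ∈ Metric.thickening ε F}
    set B₂ := {ω | ∃ m : ℕ, ⌈(1 - δ) * ((k n : ℕ) : ℝ)⌉ ≤ (m : ℤ) ∧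
        (m : ℤ) ≤ ⌊(1 + δ) * ((k n : ℕ) : ℝ)⌋ ∧ ε ≤ dist (ξ (k n) ω) (ξ m ω)}
    set B₃ := {ω | δ ≤ |(N n ω : ℝ) / (k n : ℝ) - 1|}
    have hsub : {ω | ξ (N n ω) ω ∈ F} ⊆ B₁ ∪ B₂ ∪ B₃ := by
      intro ω hω
      by_cases h3' : δ ≤ |(N n ω : ℝ) / (k n : ℝ) - 1|
      · exact Or.inr h3'
      · push_neg at h3'
        have hk : (0:ℝ) < (k n : ℝ) := by exact_mod_cast hkpos n
        have habs := abs_lt.mp h3'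
        have hlo : (1 - δ) * (k n : ℝ) < (N n ω : ℝ) :=
          (lt_div_iff₀ hk).mp (by linarith [habs.1])
        have hhi : (N n ω : ℝ) < (1 + δ) * (k n : ℝ) :=
          (div_lt_iff₀ hk).mp (by linarith [habs.2])
        by_cases hd : ε ≤ dist (ξ (k n) ω) (ξ (N n ω) ω)
        · refine Or.inl (Or.inr ⟨N n ω, ?_, ?_, hd⟩)
          · exact Int.ceil_le.mpr (by exact_mod_cast hlo.le)
          · exact Int.le_floor.mpr (by exact_mod_cast hhi.le)
        · push_neg at hd
          exact Or.inl (Or.inl (Metric.mem_thickening_iff.mpr ⟨_, hω, hd⟩))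
    have hm : P {ω | ξ (N n ω) ω ∈ F} ≤ P B₁ + P B₂ + P B₃ :=
      le_trans (measure_mono hsub)
        (le_trans (measure_union_le _ _) (add_le_add_left (measure_union_le _ _) _))
    have hmr : (P {ω | ξ (N n ω) ω ∈ F}).toReal ≤ (P B₁ + P B₂ + P B₃).toReal :=
      ENNReal.toReal_mono (by simp [measure_ne_top, ENNReal.add_ne_top]) hm
    rw [ENNReal.toReal_add (by simp [ENNReal.add_ne_top, measure_ne_top]) (measure_ne_top _ _),
      ENNReal.toReal_add (measure_ne_top _ _) (measure_ne_top _ _)] at hmr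
    have h1' : (P B₁).toReal = a (k n) := rfl
    have h2' : (P B₂).toReal = oscProb P ξ δ ε (k n) := rfl
    rw [h1', h2'] at hmr
    linarith
  have hbdd : IsBoundedUnder (· ≥ ·) atTop (fun n => (P {ω | ξ (N n ω) ω ∈ F}).toReal) :=
    isBoundedUnder_of ⟨0, fun n => ENNReal.toReal_nonneg⟩
  have hco : IsCoboundedUnder (· ≤ ·) atTop (fun n => (P {ω | ξ (N n ω) ω ∈ F}).toReal) :=
    hbdd.isCoboundedUnder_le
  have := limsup_le_of_le hco hevmain
  linarith
end

section
/- Let X be a separable metric space and ξ, (ξ_n) X-valued random variables on a common probability space. Define λ_P(ξ_n → ξ) = sup_{ε>0} limsup_n P[d(ξ, ξ_n) ≥ ε] and λ_w(ξ_n → ξ) = sup_{F closed} limsup_n (P[ξ_n ∈ F] − P[ξ ∈ F]). Then λ_w(ξ_n → ξ) ≤ λ_P(ξ_n → ξ). -/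
open MeasureTheory Filter Topology

theorem lamW_le_lamP {Ω X : Type*} [MeasurableSpace Ω] [MetricSpace X]
    [TopologicalSpace.SeparableSpace X] [MeasurableSpace X] [BorelSpace X]
    (P : Measure Ω) [IsProbabilityMeasure P]
    (ξ : ℕ → Ω → X) (ζ : Ω → X)
    (hξ : ∀ n, Measurable (ξ n)) (hζ : Measurable ζ) :
    lamW P ξ ζ ≤ lamP P ξ ζ := by
  have h1 : ∀ S : Set Ω, (P S).toReal ≤ 1 := fun S => by
    have := measure_mono (Set.subset_univ S) (μ := P)
    have h := ENNReal.toReal_mono (measure_ne_top P _) this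
    simpa using h
  have h0 : ∀ S : Set Ω, 0 ≤ (P S).toReal := fun S => ENNReal.toReal_nonneg
  -- boundedness facts
  have hbdd : ∀ f : ℕ → Set Ω, IsBoundedUnder (· ≤ ·) atTop (fun n => (P (f n)).toReal) :=
    fun f => isBoundedUnder_of ⟨1, fun n => h1 _⟩
  have hbdd' : ∀ f : ℕ → Set Ω, IsBoundedUnder (· ≥ ·) atTop (fun n => (P (f n)).toReal) :=
    fun f => isBoundedUnder_of ⟨0, fun n => h0 _⟩
  have hlimsup_le_one : ∀ f : ℕ → Set Ω, limsup (fun n => (P (f n)).toReal) atTop ≤ 1 :=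
    fun f => limsup_le_of_le (hbdd' f).isCoboundedUnder_le (Eventually.of_forall fun n => h1 _)
  have hBdd : BddAbove (Set.range fun ε : {x : ℝ // 0 < x} =>
      limsup (fun n => (P {ω | ε.1 ≤ dist (ζ ω) (ξ n ω)}).toReal) atTop) := by
    refine ⟨1, ?_⟩
    rintro x ⟨ε, rfl⟩
    exact hlimsup_le_one _
  have : Nonempty {F : Set X // IsClosed F} := ⟨⟨∅, isClosed_empty⟩⟩
  apply ciSup_le
  rintro ⟨F, hF⟩
  apply le_of_forall_pos_le_add
  intro η hη
  -- find ε > 0 with P(ζ ∈ cthickening ε F) < P(ζ ∈ F) + η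
  set μ : Measure X := P.map ζ with hμ
  haveI : IsProbabilityMeasure μ := Measure.isProbabilityMeasure_map hζ.aemeasurable
  have htend : Tendsto (fun r => μ (Metric.cthickening r F)) (𝓝 0) (𝓝 (μ F)) :=
    tendsto_measure_cthickening_of_isClosed ⟨1, one_pos, measure_ne_top μ _⟩ hF
  have hlt : μ F < μ F + ENNReal.ofReal η := by
    apply ENNReal.lt_add_right (measure_ne_top μ _)
    simpa using hη
  have hev : ∀ᶠ r in 𝓝[>] (0:ℝ), μ (Metric.cthickening r F) < μ F + ENNReal.ofReal η :=
    (htend.mono_left nhdsWithin_le_nhds).eventually_lt_const hlt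
  obtain ⟨ε, hεpos, hεlt⟩ := (eventually_mem_nhdsWithin.and hev).exists
  -- translate to P
  have hmapF : μ F = P {ω | ζ ω ∈ F} := Measure.map_apply hζ hF.measurableSet
  have hmapC : μ (Metric.cthickening ε F) = P {ω | ζ ω ∈ Metric.cthickening ε F} :=
    Measure.map_apply hζ Metric.isClosed_cthickening.measurableSet
  have hC : (P {ω | ζ ω ∈ Metric.cthickening ε F}).toReal ≤ (P {ω | ζ ω ∈ F}).toReal + η := by
    rw [← hmapF, ← hmapC]
    have := ENNReal.toReal_mono (by finiteness) hεlt.le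
    rwa [ENNReal.toReal_add (measure_ne_top μ _) ENNReal.ofReal_ne_top,
      ENNReal.toReal_ofReal hη.le] at this
  -- pointwise set inclusion
  have hsub : ∀ n, {ω | ξ n ω ∈ F} ⊆
      {ω | ζ ω ∈ Metric.cthickening ε F} ∪ {ω | ε ≤ dist (ζ ω) (ξ n ω)} := by
    intro n ω hω
    rcases le_or_gt ε (dist (ζ ω) (ξ n ω)) with h | h
    · exact Or.inr h
    · exact Or.inl (Metric.mem_cthickening_of_dist_le _ _ _ _ hω h.le)
  have hkey : ∀ n, (P {ω | ξ n ω ∈ F}).toReal - (P {ω | ζ ω ∈ F}).toReal ≤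
      (P {ω | ε ≤ dist (ζ ω) (ξ n ω)}).toReal + η := by
    intro n
    have h2 : P {ω | ξ n ω ∈ F} ≤ P {ω | ζ ω ∈ Metric.cthickening ε F} +
        P {ω | ε ≤ dist (ζ ω) (ξ n ω)} :=
      le_trans (measure_mono (hsub n)) (measure_union_le _ _)
    have h3 := ENNReal.toReal_mono (by finiteness) h2
    rw [ENNReal.toReal_add (measure_ne_top P _) (measure_ne_top P _)] at h3
    linarith [hC]
  -- limsup estimate
  have hls : limsup (fun n => (P {ω | ξ n ω ∈ F}).toReal - (P {ω | ζ ω ∈ F}).toReal) atTop ≤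
      limsup (fun n => (P {ω | ε ≤ dist (ζ ω) (ξ n ω)}).toReal + η) atTop := by
    refine limsup_le_limsup (Eventually.of_forall hkey) ?_ ?_
    · refine (isBoundedUnder_of ⟨0 - (P {ω | ζ ω ∈ F}).toReal, fun n => ?_⟩).isCoboundedUnder_le
      exact sub_le_sub_right (h0 _) _
    · exact isBoundedUnder_of ⟨1 + η, fun n => add_le_add_left (h1 _) _⟩
  rw [limsup_add_const atTop _ η (hbdd _) (hbdd' _).isCoboundedUnder_le] at hls
  refine hls.trans (add_le_add_left ?_ η)
  exact le_ciSup hBdd (⟨ε, hεpos⟩ : {x : ℝ // 0 < x})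
end

section
/- Let X be a separable metric space, (ξ_n) X-valued random variables, (N_n) ℕ-valued random variables, and (k_n) a sequence of positive integers with k_n → ∞ such that N_n/k_n → 1 in probability. If (ξ_n) satisfies Anscombe's condition, then d(ξ_{N_n}, ξ_{k_n}) → 0 in probability, i.e., for every ε > 0, P[d(ξ_{N_n}, ξ_{k_n}) ≥ ε] → 0. -/
open MeasureTheory Filter Topology

theorem dist_randomized_tendsto_zero_inProb {Ω X : Type*} [MeasurableSpace Ω] [MetricSpace X]
    [TopologicalSpace.SeparableSpace X] [MeasurableSpace X] [BorelSpace X]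
    (P : Measure Ω) [IsProbabilityMeasure P]
    (ξ : ℕ → Ω → X) (N : ℕ → Ω → ℕ)
    (hξ : ∀ n, Measurable (ξ n)) (hN : ∀ n, Measurable (N n))
    (k : ℕ → ℕ) (hkpos : ∀ n, 0 < k n) (hktop : Tendsto k atTop atTop)
    (hprob : ∀ ε > (0 : ℝ),
      Tendsto (fun n => (P {ω | ε ≤ |(N n ω : ℝ) / (k n : ℝ) - 1|}).toReal) atTop (𝓝 0))
    (hAnsc : AnscombeCond P ξ) :
    ∀ ε > (0 : ℝ),
      Tendsto (fun n => (P {ω | ε ≤ dist (ξ (N n ω) ω) (ξ (k n) ω)}).toReal)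
        atTop (𝓝 0) := by
  intro ε hε
  rw [Metric.tendsto_atTop]
  intro η hη
  set ε' := min ε (η/2) with hε'def
  have hε'pos : 0 < ε' := lt_min hε (by linarith)
  obtain ⟨δ, hδ, n₀, hosc⟩ := hAnsc ε' hε'pos
  have h1 := (hprob δ hδ).eventually (gt_mem_nhds (show (0:ℝ) < η/2 by linarith))
  have h2 : ∀ᶠ n in atTop, n₀ ≤ k n := hktop.eventually (eventually_ge_atTop n₀)
  obtain ⟨M, hM⟩ := (h1.and h2).exists_forall_of_atTop
  refine ⟨M, fun n hn => ?_⟩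
  obtain ⟨hP, hk⟩ := hM n hn
  have hkR : (0:ℝ) < (k n : ℝ) := by exact_mod_cast hkpos n
  -- set inclusion
  have hsub : {ω | ε ≤ dist (ξ (N n ω) ω) (ξ (k n) ω)} ⊆
      {ω | ∃ m : ℕ, ⌈(1 - δ) * ((k n : ℕ) : ℝ)⌉ ≤ (m : ℤ) ∧
        (m : ℤ) ≤ ⌊(1 + δ) * ((k n : ℕ) : ℝ)⌋ ∧ ε' ≤ dist (ξ (k n) ω) (ξ m ω)} ∪
      {ω | δ ≤ |(N n ω : ℝ) / (k n : ℝ) - 1|} := by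
    intro ω hω
    by_cases hc : δ ≤ |(N n ω : ℝ) / (k n : ℝ) - 1|
    · exact Or.inr hc
    · left
      push_neg at hc
      rw [abs_lt] at hc
      refine ⟨N n ω, ?_, ?_, ?_⟩
      · rw [Int.ceil_le]
        push_cast
        nlinarith [(div_lt_iff₀ hkR).mp (by linarith : (N n ω : ℝ) / (k n : ℝ) < 1 + δ),
          (lt_div_iff₀ hkR).mp (by linarith : (1 - δ : ℝ) < (N n ω : ℝ) / (k n : ℝ))]
      · rw [Int.le_floor]
        push_cast
        nlinarith [(div_lt_iff₀ hkR).mp (by linarith : (N n ω : ℝ) / (k n : ℝ) < 1 + δ)]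
      · rw [dist_comm]
        exact le_trans (min_le_left _ _) hω
  have hmeas : P {ω | ε ≤ dist (ξ (N n ω) ω) (ξ (k n) ω)} ≤
      P {ω | ∃ m : ℕ, ⌈(1 - δ) * ((k n : ℕ) : ℝ)⌉ ≤ (m : ℤ) ∧
        (m : ℤ) ≤ ⌊(1 + δ) * ((k n : ℕ) : ℝ)⌋ ∧ ε' ≤ dist (ξ (k n) ω) (ξ m ω)} +
      P {ω | δ ≤ |(N n ω : ℝ) / (k n : ℝ) - 1|} :=
    le_trans (measure_mono hsub) (measure_union_le _ _)
  have hfin1 : P {ω | ∃ m : ℕ, ⌈(1 - δ) * ((k n : ℕ) : ℝ)⌉ ≤ (m : ℤ) ∧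
        (m : ℤ) ≤ ⌊(1 + δ) * ((k n : ℕ) : ℝ)⌋ ∧ ε' ≤ dist (ξ (k n) ω) (ξ m ω)} ≠ ⊤ :=
    measure_ne_top _ _
  have hfin2 : P {ω | δ ≤ |(N n ω : ℝ) / (k n : ℝ) - 1|} ≠ ⊤ := measure_ne_top _ _
  have hto : (P {ω | ε ≤ dist (ξ (N n ω) ω) (ξ (k n) ω)}).toReal ≤
      oscProb P ξ δ ε' (k n) + (P {ω | δ ≤ |(N n ω : ℝ) / (k n : ℝ) - 1|}).toReal := by
    have := ENNReal.toReal_mono (by simp [ENNReal.add_ne_top, hfin1, hfin2]) hmeas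
    rwa [ENNReal.toReal_add hfin1 hfin2] at this
  have hoscn : oscProb P ξ δ ε' (k n) < ε' := hosc (k n) hk
  have hε'le : ε' ≤ η/2 := min_le_right _ _
  rw [Real.dist_eq, sub_zero, abs_of_nonneg ENNReal.toReal_nonneg]
  linarith
end
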